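/- arXiv:2404.00940 — 11 statements merged into one kernel-verified Lean document; each statement's English description precedes it below -/
import Mathlib

section
/- Let k ≥ 2, let p be a probability vector on {1,…,k} (i.e. p ∈ Δ^k), and let X_1,…,X_n be i.i.d. random variables with distribution p. Let p̂_n denote the empirical distribution, p̂_n(i) = (1/n)·#{j ≤ n : X_j = i}. Then for every ε > 0, the probability that ‖p̂_n − p‖₁ ≥ ε is at most (2^k − 2)·exp(−n·ε²/2). -/
/-!
A zero-sum vector `d` satisfies `‖d‖₁ = 2 ∑_{d i > 0} d i`, so if `‖p̂ - p‖₁ ≥ ε` then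
`p̂(A) - p(A) ≥ ε / 2` for the set `A` where `p̂ > p`, which is nonempty and proper. For each of
the `2 ^ k - 2` nonempty proper subsets `A`, the indicators `1_A(X_j)` are i.i.d. Bernoulli
variables with mean `p(A)`, and Hoeffding's inequality bounds this event by `exp (-n ε² / 2)`;
a union bound over `A` concludes.
-/

open MeasureTheory ProbabilityTheory Finset Real

section Hoeffding

variable {Ω ι α : Type*} [MeasurableSpace Ω] {μ : Measure Ω} [IsProbabilityMeasure μ]
  [Fintype ι] [MeasurableSpace α]

lemma measureReal_sum_indicator_sub_ge_le {X : ι → Ω → α} (hmeas : ∀ j, Measurable (X j))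
    (hindep : iIndepFun X μ) {A : Set α} (hA : MeasurableSet A) {q : ℝ}
    (hq : ∀ j, μ.real (X j ⁻¹' A) = q) {t : ℝ} (ht : 0 ≤ t) :
    μ.real {ω | t ≤ ∑ j, (A.indicator 1 (X j ω) - q)} ≤
      exp (-2 * t ^ 2 / Fintype.card ι) := by
  have hφ : Measurable (fun x : α => A.indicator (1 : α → ℝ) x - q) :=
    (measurable_one.indicator hA).sub_const q
  have hmean j : μ[fun ω => A.indicator (1 : α → ℝ) (X j ω)] = q := by
    simp_rw [← Set.indicator_comp_right (X j) (g := (1 : α → ℝ))]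
    rw [← hq j]
    exact integral_indicator_one (hmeas j hA)
  have hsubG : ∀ j ∈ (univ : Finset ι),
      HasSubgaussianMGF (fun ω => A.indicator 1 (X j ω) - q) ((‖(1 : ℝ) - 0‖₊ / 2) ^ 2) μ := by
    intro j _
    rw [← hmean j]
    refine hasSubgaussianMGF_of_mem_Icc ((measurable_one.indicator hA).comp (hmeas j)).aemeasurable
      (ae_of_all _ fun ω => ?_)
    by_cases h : X j ω ∈ A <;> simp [h]
  calc _ ≤ _ := HasSubgaussianMGF.measure_sum_ge_le_of_iIndepFun
        (hindep.comp (fun _ => _) fun _ => hφ) hsubG ht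
    _ = _ := by
      congr 1
      simp only [sum_const, card_univ, nsmul_eq_mul]
      norm_num
      ring

lemma measureReal_preimage_finset_eq_sum [MeasurableSingletonClass α] {X : Ω → α}
    (hX : Measurable X) {p : α → ℝ} (hp : ∀ i, 0 ≤ p i)
    (hdist : ∀ i, μ {ω | X ω = i} = ENNReal.ofReal (p i)) (A : Finset α) :
    μ.real (X ⁻¹' A) = ∑ i ∈ A, p i := by
  rw [← sum_measureReal_preimage_singleton A fun i _ => hX (measurableSet_singleton i)]
  exact sum_congr rfl fun i _ =>
    (congrArg ENNReal.toReal (hdist i)).trans (ENNReal.toReal_ofReal (hp i))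

end Hoeffding

section Deviation

variable {α : Type*} [Fintype α]

lemma sum_abs_eq_two_mul_sum_pos {d : α → ℝ} (hd : ∑ i, d i = 0) :
    ∑ i, |d i| = 2 * ∑ i with 0 < d i, d i := by
  have hsplit := sum_filter_add_sum_filter_not univ (fun i => 0 < d i) d
  rw [← sum_filter_add_sum_filter_not univ (fun i => 0 < d i) (fun i => |d i|),
    sum_congr rfl fun i hi => abs_of_pos (mem_filter.mp hi).2,
    sum_congr rfl fun i hi => abs_of_nonpos (not_lt.mp (mem_filter.mp hi).2), sum_neg_distrib]
  linarith

variable [DecidableEq α]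

lemma exists_mem_ssubsets_erase_empty_le_sum {d : α → ℝ} (hd : ∑ i, d i = 0) {ε : ℝ}
    (hε : 0 < ε) (h : ε ≤ ∑ i, |d i|) :
    ∃ A ∈ (univ : Finset α).ssubsets.erase ∅, ε / 2 ≤ ∑ i ∈ A, d i := by
  set A : Finset α := {i | 0 < d i}
  have hA : ε / 2 ≤ ∑ i ∈ A, d i := by linarith [sum_abs_eq_two_mul_sum_pos hd]
  have hA_pos : 0 < ∑ i ∈ A, d i := by linarith
  refine ⟨A, mem_erase.mpr ⟨?_, mem_ssubsets.mpr (ssubset_univ_iff.mpr ?_)⟩, hA⟩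
  · intro hA_empty
    simp [hA_empty] at hA_pos
  · intro hA_univ
    rw [hA_univ, hd] at hA_pos
    exact hA_pos.false

lemma card_ssubsets_univ_erase_empty [Nonempty α] :
    (#((univ : Finset α).ssubsets.erase ∅) : ℝ) = 2 ^ Fintype.card α - 2 := by
  have htwo : 2 ≤ 2 ^ Fintype.card α := Nat.le_self_pow Fintype.card_ne_zero 2
  rw [card_erase_of_mem (empty_mem_ssubsets univ_nonempty), ssubsets,
    card_erase_of_mem (mem_powerset_self _), card_powerset, card_univ, Nat.sub_sub,
    Nat.cast_sub htwo]
  norm_num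

end Deviation

section Empirical

variable {ι α : Type*} [Fintype ι] [DecidableEq α]

lemma sum_count_div_sub_eq (f : ι → α) (p : α → ℝ) (hι : (Fintype.card ι : ℝ) ≠ 0)
    (A : Finset α) :
    ∑ i ∈ A, ((#{j | f j = i} : ℝ) / Fintype.card ι - p i) =
      (∑ j, ((A : Set α).indicator 1 (f j) - ∑ i ∈ A, p i)) / Fintype.card ι := by
  have hcount : ∑ j, (A : Set α).indicator (1 : α → ℝ) (f j) = ∑ i ∈ A, (#{j | f j = i} : ℝ) := by
    simp only [Set.indicator_apply, mem_coe, Pi.one_apply, sum_boole]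
    rw [← Nat.cast_sum, sum_card_fiberwise_eq_card_filter]
  rw [sum_sub_distrib, sum_sub_distrib, hcount, ← sum_div, sum_const, card_univ, nsmul_eq_mul]
  field_simp

variable [Fintype α] [Nonempty ι]

lemma exists_mem_ssubsets_erase_empty_le_sum_indicator_sub (f : ι → α) {p : α → ℝ}
    (hp : ∑ i, p i = 1) {ε : ℝ} (hε : 0 < ε)
    (h : ε ≤ ∑ i, |(#{j | f j = i} : ℝ) / Fintype.card ι - p i|) :
    ∃ A ∈ (univ : Finset α).ssubsets.erase ∅,
      Fintype.card ι * ε / 2 ≤ ∑ j, ((A : Set α).indicator 1 (f j) - ∑ i ∈ A, p i) := by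
  have hι : (0 : ℝ) < Fintype.card ι := by exact_mod_cast Fintype.card_pos
  have hdev := sum_count_div_sub_eq f p hι.ne'
  obtain ⟨A, hA, hεA⟩ :=
    exists_mem_ssubsets_erase_empty_le_sum (by simpa [hp] using hdev univ) hε h
  rw [hdev A, le_div_iff₀ hι] at hεA
  exact ⟨A, hA, by linarith⟩

end Empirical

theorem l1_empirical_concentration_general
    (k n : ℕ) (hn : 1 ≤ n)
    (p : Fin k → ℝ) (hp : p ∈ stdSimplex ℝ (Fin k))
    (Ω : Type*) [MeasurableSpace Ω] (μ : Measure Ω) [IsProbabilityMeasure μ]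
    (X : Fin n → Ω → Fin k)
    (hmeas : ∀ j, Measurable (X j))
    (hindep : iIndepFun X μ)
    (hdist : ∀ j i, μ {ω | X j ω = i} = ENNReal.ofReal (p i))
    (ε : ℝ) (hε : 0 < ε) :
    μ {ω | ε ≤ ∑ i, |((Finset.univ.filter (fun j => X j ω = i)).card : ℝ) / n - p i|}
      ≤ ENNReal.ofReal ((2 ^ k - 2) * Real.exp (-(n : ℝ) * ε ^ 2 / 2)) := by
  obtain ⟨hp_nonneg, hp_sum⟩ := hp
  have : Nonempty (Fin k) := by
    by_contra h
    simp [not_nonempty_iff.mp h] at hp_sum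
  have : Nonempty (Fin n) := Fin.pos_iff_nonempty.mp hn
  set S := (univ : Finset (Fin k)).ssubsets.erase ∅
  set E : Finset (Fin k) → Set Ω := fun A =>
    {ω | n * ε / 2 ≤ ∑ j, ((A : Set (Fin k)).indicator 1 (X j ω) - ∑ i ∈ A, p i)}
  have hcover : {ω | ε ≤ ∑ i, |(#{j | X j ω = i} : ℝ) / n - p i|} ⊆ ⋃ A ∈ S, E A := by
    intro ω hω
    obtain ⟨A, hAS, hA⟩ := exists_mem_ssubsets_erase_empty_le_sum_indicator_sub (X · ω) hp_sum hε
      (by simpa only [Fintype.card_fin] using Set.mem_ofPred.mp hω)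
    rw [Fintype.card_fin] at hA
    exact Set.mem_biUnion hAS hA
  have hE (A : Finset (Fin k)) : μ.real (E A) ≤ exp (-n * ε ^ 2 / 2) := by
    have := measureReal_sum_indicator_sub_ge_le hmeas hindep A.measurableSet
      (fun j => measureReal_preimage_finset_eq_sum (hmeas j) hp_nonneg (hdist j) A)
      (by positivity : 0 ≤ n * ε / 2)
    convert this using 2
    simp only [Fintype.card_fin]
    field_simp
  calc μ {ω | ε ≤ ∑ i, |(#{j | X j ω = i} : ℝ) / n - p i|}
      ≤ μ (⋃ A ∈ S, E A) := measure_mono hcover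
    _ = ENNReal.ofReal (μ.real (⋃ A ∈ S, E A)) := (ofReal_measureReal (measure_ne_top _ _)).symm
    _ ≤ ENNReal.ofReal (∑ A ∈ S, exp (-n * ε ^ 2 / 2)) := by
      gcongr
      exact (measureReal_biUnion_finset_le S E).trans (sum_le_sum fun A _ => hE A)
    _ = ENNReal.ofReal ((2 ^ k - 2) * exp (-n * ε ^ 2 / 2)) := by
      rw [sum_const, nsmul_eq_mul, card_ssubsets_univ_erase_empty, Fintype.card_fin]

/-- **Weissman et al. L1 concentration bound for the empirical distribution.**
If `X_1, …, X_n` are i.i.d. with distribution `p ∈ Δ^k` (`k ≥ 2`), and `p̂` is the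
empirical distribution, then `P(‖p̂ − p‖₁ ≥ ε) ≤ (2^k − 2)·exp(−n ε² / 2)`. -/
theorem l1_empirical_concentration
    (k n : ℕ) (hk : 2 ≤ k) (hn : 1 ≤ n)
    (p : Fin k → ℝ) (hp : p ∈ stdSimplex ℝ (Fin k))
    (Ω : Type*) [MeasurableSpace Ω] (μ : Measure Ω) [IsProbabilityMeasure μ]
    (X : Fin n → Ω → Fin k)
    (hmeas : ∀ j, Measurable (X j))
    (hindep : iIndepFun X μ)
    (hdist : ∀ j i, μ {ω | X j ω = i} = ENNReal.ofReal (p i))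
    (ε : ℝ) (hε : 0 < ε) :
    μ {ω | ε ≤ ∑ i, |((Finset.univ.filter (fun j => X j ω = i)).card : ℝ) / n - p i|}
      ≤ ENNReal.ofReal ((2 ^ k - 2) * Real.exp (-(n : ℝ) * ε ^ 2 / 2)) :=
  l1_empirical_concentration_general k n hn p hp Ω μ X hmeas hindep hdist ε hε
end

section
/- Let p̂ ∈ Δ^k have full support, let v ∈ ℝ^k, and let θ > 0. Then the infimum over p ∈ Δ^k satisfying KL(p‖p̂) ≤ θ of Σ_i p_i v_i equals the supremum over λ ≥ 0 of g(λ), where g(λ) = −λθ − λ·log( Σ_i p̂_i·exp(−v_i/λ) ) for λ > 0 and g(0) = min_i v_i. -/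
/-!
For `λ > 0` let `q_λ ∝ p̂ · exp (-v / λ)` be the Gibbs tilt of `p̂`, with normalizer `Z(λ)`.
The identity `KL(p ‖ q_λ) = KL(p ‖ p̂) + ⟨p, v⟩ / λ + log Z(λ)` together with Gibbs' inequality
gives weak duality, and at `p = q_λ` it shows `⟨q_λ, v⟩ = g(λ)` as soon as `KL(q_λ ‖ p̂) = θ`.
As `1 / λ` runs from `0` to `∞`, `KL(q_λ ‖ p̂)` moves continuously from `0` towards `-log p̂(A)`,
where `A` is the set of minimizers of `v` and `q_λ` tends to `p̂(· | A)`. So either the budget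
`θ` is hit exactly by some `q_λ`, or `p̂(· | A)` is feasible and attains `g(0) = min v`.
-/

open Real Finset Filter Topology

lemma csInf_eq_csSup_of_mem_of_forall_le {α : Type*} [ConditionallyCompleteLattice α]
    {P D : Set α} {x : α} (hP : x ∈ P) (hD : x ∈ D) (h : ∀ a ∈ P, ∀ b ∈ D, b ≤ a) :
    sInf P = sSup D :=
  (IsLeast.csInf_eq ⟨hP, fun a ha => h a ha x hD⟩).trans
    (IsGreatest.csSup_eq ⟨hD, fun b hb => h x hP b hb⟩).symm

namespace DiscreteKL

variable {ι : Type*} [Fintype ι]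

noncomputable def klDiv (p q : ι → ℝ) : ℝ := ∑ i, p i * log (p i / q i)

@[simp]
lemma klDiv_self (q : ι → ℝ) : klDiv q q = 0 := by
  simp [klDiv]

lemma sub_le_mul_log_div {a b : ℝ} (ha : 0 ≤ a) (hb : 0 < b) : a - b ≤ a * log (a / b) := by
  rcases ha.eq_or_lt with rfl | ha
  · simpa using hb.le
  calc a - b = a * (1 - (a / b)⁻¹) := by field_simp
    _ ≤ a * log (a / b) := by gcongr; exact one_sub_inv_le_log_of_pos (div_pos ha hb)

lemma klDiv_nonneg {p q : ι → ℝ} (hp : ∀ i, 0 ≤ p i) (hq : ∀ i, 0 < q i)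
    (hsum : ∑ i, q i ≤ ∑ i, p i) : 0 ≤ klDiv p q :=
  calc 0 ≤ ∑ i, (p i - q i) := by rw [sum_sub_distrib]; linarith
    _ ≤ klDiv p q := sum_le_sum fun i _ => sub_le_mul_log_div (hp i) (hq i)

lemma continuous_klDiv_left (q : ι → ℝ) : Continuous fun p : ι → ℝ => klDiv p q := by
  refine continuous_finsetSum _ fun i _ => ?_
  by_cases hqi : q i = 0
  · simpa [hqi] using continuous_const
  have h : ∀ x : ℝ, x * log (x / q i) = x * log x - x * log (q i) := fun x => by
    rcases eq_or_ne x 0 with rfl | hx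
    · simp
    · rw [log_div hx hqi, mul_sub]
  simp_rw [h]
  exact ((continuous_mul_log.comp (continuous_apply i)).sub
    ((continuous_apply i).mul continuous_const))

noncomputable def partitionFn (q v : ι → ℝ) (β : ℝ) : ℝ := ∑ i, q i * exp (-(β * v i))

noncomputable def gibbs (q v : ι → ℝ) (β : ℝ) (i : ι) : ℝ :=
  q i * exp (-(β * v i)) / partitionFn q v β

section Gibbs

variable {q : ι → ℝ} (v : ι → ℝ) (β : ℝ)

lemma partitionFn_pos [Nonempty ι] (hq : ∀ i, 0 < q i) : 0 < partitionFn q v β :=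
  sum_pos (fun i _ => mul_pos (hq i) (exp_pos _)) univ_nonempty

lemma partitionFn_inv_eq (lam : ℝ) :
    partitionFn q v lam⁻¹ = ∑ i, q i * exp (-v i / lam) := by
  simp only [partitionFn, div_eq_inv_mul, mul_neg]

lemma gibbs_pos [Nonempty ι] (hq : ∀ i, 0 < q i) (i : ι) : 0 < gibbs q v β i :=
  div_pos (mul_pos (hq i) (exp_pos _)) (partitionFn_pos v β hq)

lemma sum_gibbs [Nonempty ι] (hq : ∀ i, 0 < q i) : ∑ i, gibbs q v β i = 1 := by
  simp only [gibbs, ← sum_div]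
  exact div_self (partitionFn_pos v β hq).ne'

lemma gibbs_mem_stdSimplex [Nonempty ι] (hq : ∀ i, 0 < q i) :
    gibbs q v β ∈ stdSimplex ℝ ι :=
  ⟨fun i => (gibbs_pos v β hq i).le, sum_gibbs v β hq⟩

lemma gibbs_zero (hq : ∑ i, q i = 1) : gibbs q v 0 = q := by
  ext i
  simp [gibbs, partitionFn, hq]

lemma log_gibbs [Nonempty ι] (hq : ∀ i, 0 < q i) (i : ι) :
    log (gibbs q v β i) = log (q i) - β * v i - log (partitionFn q v β) := by
  rw [gibbs, log_div (mul_pos (hq i) (exp_pos _)).ne' (partitionFn_pos v β hq).ne',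
    log_mul (hq i).ne' (exp_pos _).ne', log_exp]
  ring

lemma klDiv_gibbs [Nonempty ι] (hq : ∀ i, 0 < q i) {p : ι → ℝ} (hp : ∑ i, p i = 1) :
    klDiv p (gibbs q v β) = klDiv p q + β * ∑ i, p i * v i + log (partitionFn q v β) := by
  have h : ∀ i, p i * log (p i / gibbs q v β i)
      = p i * log (p i / q i) + β * (p i * v i) + log (partitionFn q v β) * p i := by
    intro i
    rcases eq_or_ne (p i) 0 with hpi | hpi
    · simp [hpi]
    rw [log_div hpi (gibbs_pos v β hq i).ne', log_gibbs v β hq, log_div hpi (hq i).ne']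
    ring
  simp only [klDiv, h, sum_add_distrib, ← mul_sum, hp, mul_one]

end Gibbs

noncomputable def dualObjective [Nonempty ι] (q v : ι → ℝ) (θ lam : ℝ) : ℝ :=
  if lam = 0 then univ.inf' univ_nonempty v
  else -lam * θ - lam * log (∑ i, q i * exp (-v i / lam))

section Duality

variable [Nonempty ι] {q v p : ι → ℝ} {θ : ℝ}

lemma dualObjective_of_ne_zero {lam : ℝ} (hlam : lam ≠ 0) :
    dualObjective q v θ lam = -lam * θ - lam * log (partitionFn q v lam⁻¹) := by
  rw [dualObjective, if_neg hlam, partitionFn_inv_eq]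

lemma inf'_le_sum_mul (hp : p ∈ stdSimplex ℝ ι) : univ.inf' univ_nonempty v ≤ ∑ i, p i * v i :=
  calc univ.inf' univ_nonempty v = ∑ i, p i * univ.inf' univ_nonempty v := by
        rw [← sum_mul, hp.2, one_mul]
    _ ≤ ∑ i, p i * v i :=
        sum_le_sum fun i _ => mul_le_mul_of_nonneg_left (inf'_le v (mem_univ i)) (hp.1 i)

/-- `KL(p ‖ gibbs q v λ⁻¹) ≥ 0` rearranges to `g(λ) ≤ ⟨p, v⟩`. -/
lemma dualObjective_le_sum_mul (hq : ∀ i, 0 < q i) (hp : p ∈ stdSimplex ℝ ι)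
    (hKL : klDiv p q ≤ θ) {lam : ℝ} (hlam : 0 ≤ lam) :
    dualObjective q v θ lam ≤ ∑ i, p i * v i := by
  rcases hlam.eq_or_lt with rfl | hlam
  · rw [dualObjective, if_pos rfl]
    exact inf'_le_sum_mul hp
  have hgibbs := klDiv_nonneg hp.1 (gibbs_pos v lam⁻¹ hq) (by rw [sum_gibbs v _ hq, hp.2])
  rw [klDiv_gibbs v _ hq hp.2] at hgibbs
  rw [dualObjective_of_ne_zero hlam.ne']
  have h := mul_nonneg hlam.le hgibbs
  rw [mul_add, mul_add, mul_inv_cancel_left₀ hlam.ne'] at h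
  nlinarith [mul_le_mul_of_nonneg_left hKL hlam.le]

lemma sum_gibbs_mul_eq_dualObjective (hq : ∀ i, 0 < q i) {β : ℝ} (hβ : 0 < β)
    (hKL : klDiv (gibbs q v β) q = θ) :
    ∑ i, gibbs q v β i * v i = dualObjective q v θ β⁻¹ := by
  have h := klDiv_gibbs v β hq (sum_gibbs v β hq)
  rw [klDiv_self, hKL] at h
  rw [dualObjective_of_ne_zero (inv_ne_zero hβ.ne'), inv_inv]
  field_simp
  linarith

end Duality

section Concentration

variable {q : ι → ℝ} (v : ι → ℝ)

lemma gibbs_sub_const (β c : ℝ) : gibbs q (fun i => v i - c) β = gibbs q v β := by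
  have h : ∀ i, exp (-(β * (v i - c))) = exp (-(β * v i)) * exp (β * c) := fun i => by
    rw [← exp_add]; ring_nf
  ext i
  simp only [gibbs, partitionFn, h, ← mul_assoc, ← sum_mul]
  exact mul_div_mul_right _ _ (exp_ne_zero _)

lemma continuous_gibbs [Nonempty ι] (hq : ∀ i, 0 < q i) : Continuous (gibbs q v) :=
  continuous_pi fun i => (continuous_const.mul (by fun_prop)).div
    (continuous_finsetSum _ fun j _ => continuous_const.mul (by fun_prop))
    fun β => (partitionFn_pos v β hq).ne'

lemma tendsto_exp_neg_mul_atTop {d : ℝ} (hd : 0 ≤ d) :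
    Tendsto (fun β => exp (-(β * d))) atTop (𝓝 (if d = 0 then 1 else 0)) := by
  rcases hd.eq_or_lt with rfl | hd
  · simp
  rw [if_neg hd.ne']
  exact tendsto_exp_neg_atTop_nhds_zero.comp (tendsto_id.atTop_mul_const hd)

variable [DecidableEq ι]

noncomputable def condDist (q : ι → ℝ) (A : Finset ι) (i : ι) : ℝ :=
  if i ∈ A then q i / ∑ j ∈ A, q j else 0

lemma condDist_mem_stdSimplex (hq : ∀ i, 0 < q i) {A : Finset ι} (hA : A.Nonempty) :
    condDist q A ∈ stdSimplex ℝ ι := by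
  have hs : 0 < ∑ j ∈ A, q j := sum_pos (fun i _ => hq i) hA
  refine ⟨fun i => ?_, ?_⟩
  · unfold condDist
    split_ifs
    exacts [div_nonneg (hq i).le hs.le, le_rfl]
  · simp only [condDist, ← sum_filter, filter_mem_eq_inter, univ_inter, ← sum_div]
    exact div_self hs.ne'

lemma klDiv_condDist (hq : ∀ i, 0 < q i) {A : Finset ι} (hA : A.Nonempty) :
    klDiv (condDist q A) q = -log (∑ j ∈ A, q j) := by
  set s := ∑ j ∈ A, q j
  have hs : 0 < s := sum_pos (fun i _ => hq i) hA
  have h : ∀ i, condDist q A i * log (condDist q A i / q i)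
      = if i ∈ A then -log s * (q i / s) else 0 := fun i => by
    unfold condDist
    split_ifs
    · rw [div_div_cancel_left' (hq i).ne', log_inv]; ring
    · simp
  rw [klDiv, sum_congr rfl fun i _ => h i, ← sum_filter, filter_mem_eq_inter, univ_inter,
    ← mul_sum, ← sum_div, div_self hs.ne', mul_one]

lemma sum_condDist_mul_of_eqOn (hq : ∀ i, 0 < q i) {A : Finset ι} (hA : A.Nonempty) {m : ℝ}
    (hv : ∀ i ∈ A, v i = m) : ∑ i, condDist q A i * v i = m := by
  have hs : 0 < ∑ j ∈ A, q j := sum_pos (fun i _ => hq i) hA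
  have h : ∀ i, condDist q A i * v i = if i ∈ A then m * (q i / ∑ j ∈ A, q j) else 0 :=
    fun i => by
      unfold condDist
      split_ifs with hi
      · rw [hv i hi, mul_comm]
      · simp
  rw [sum_congr rfl fun i _ => h i, ← sum_filter, filter_mem_eq_inter, univ_inter,
    ← mul_sum, ← sum_div, div_self hs.ne', mul_one]

lemma tendsto_gibbs_atTop (hq : ∀ i, 0 < q i) {m : ℝ} (hm : ∀ i, m ≤ v i)
    (hA : (univ.filter (v · = m)).Nonempty) :
    Tendsto (gibbs q v) atTop (𝓝 (condDist q (univ.filter (v · = m)))) := by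
  have hs : 0 < ∑ j ∈ univ.filter (v · = m), q j := sum_pos (fun i _ => hq i) hA
  have hnum : ∀ i, Tendsto (fun β => q i * exp (-(β * (v i - m)))) atTop
      (𝓝 (if v i = m then q i else 0)) := fun i => by
    simpa [sub_eq_zero] using (tendsto_exp_neg_mul_atTop (sub_nonneg.2 (hm i))).const_mul (q i)
  have hZ : Tendsto (partitionFn q (fun i => v i - m)) atTop
      (𝓝 (∑ j ∈ univ.filter (v · = m), q j)) := by
    rw [sum_filter]
    exact tendsto_finsetSum _ fun j _ => hnum j
  rw [show gibbs q v = gibbs q (fun i => v i - m) from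
    funext fun β => (gibbs_sub_const v β m).symm]
  refine tendsto_pi_nhds.2 fun i => ?_
  convert (hnum i).div hZ hs.ne' using 2
  · rfl
  · simp [condDist, ite_div]

end Concentration

section StrongDuality

variable [Nonempty ι] [DecidableEq ι] {q : ι → ℝ} (v : ι → ℝ) {θ : ℝ}

lemma exists_klDiv_gibbs_eq (hq : ∑ i, q i = 1) (hqpos : ∀ i, 0 < q i) {m : ℝ}
    (hm : ∀ i, m ≤ v i) (hA : (univ.filter (v · = m)).Nonempty) (hθ : 0 < θ)
    (hθA : θ < -log (∑ j ∈ univ.filter (v · = m), q j)) :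
    ∃ β > 0, klDiv (gibbs q v β) q = θ := by
  have hcont : Continuous fun β => klDiv (gibbs q v β) q :=
    (continuous_klDiv_left q).comp (continuous_gibbs v hqpos)
  have hlim : Tendsto (fun β => klDiv (gibbs q v β) q) atTop
      (𝓝 (-log (∑ j ∈ univ.filter (v · = m), q j))) := by
    rw [← klDiv_condDist hqpos hA]
    exact ((continuous_klDiv_left q).tendsto _).comp (tendsto_gibbs_atTop v hqpos hm hA)
  obtain ⟨β₀, hβ₀θ, hβ₀⟩ :=
    ((hlim.eventually (eventually_gt_nhds hθA)).and (eventually_ge_atTop 0)).exists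
  obtain ⟨β, hβ, hβθ⟩ := intermediate_value_Icc hβ₀ hcont.continuousOn
    ⟨by simpa [gibbs_zero v hq] using hθ.le, hβ₀θ.le⟩
  refine ⟨β, hβ.1.lt_of_ne ?_, hβθ⟩
  rintro rfl
  simp [gibbs_zero v hq] at hβθ
  linarith

lemma exists_sum_mul_eq_dualObjective (hq : ∑ i, q i = 1) (hqpos : ∀ i, 0 < q i)
    (hθ : 0 < θ) : ∃ p ∈ stdSimplex ℝ ι, klDiv p q ≤ θ ∧
      ∃ lam, 0 ≤ lam ∧ ∑ i, p i * v i = dualObjective q v θ lam := by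
  set m := univ.inf' univ_nonempty v
  have hm : ∀ i, m ≤ v i := fun i => inf'_le v (mem_univ i)
  have hA : (univ.filter (v · = m)).Nonempty := by
    obtain ⟨i, -, hi⟩ := exists_mem_eq_inf' univ_nonempty v
    exact ⟨i, mem_filter.2 ⟨mem_univ i, hi.symm⟩⟩
  by_cases hθA : -log (∑ j ∈ univ.filter (v · = m), q j) ≤ θ
  · refine ⟨condDist q _, condDist_mem_stdSimplex hqpos hA, ?_, 0, le_rfl, ?_⟩
    · rwa [klDiv_condDist hqpos hA]
    · rw [dualObjective, if_pos rfl]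
      exact sum_condDist_mul_of_eqOn v hqpos hA fun i hi => (mem_filter.1 hi).2
  obtain ⟨β, hβ, hKL⟩ := exists_klDiv_gibbs_eq v hq hqpos hm hA hθ (not_le.1 hθA)
  exact ⟨gibbs q v β, gibbs_mem_stdSimplex v β hqpos, hKL.le, β⁻¹, inv_nonneg.2 hβ.le,
    sum_gibbs_mul_eq_dualObjective hqpos hβ hKL⟩

end StrongDuality

end DiscreteKL

/-- **Strong Lagrangian duality for the KL-constrained robust Bellman update.**
For a full-support nominal `p̂ ∈ Δ^k`, values `v ∈ ℝ^k` and radius `θ > 0`,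
`inf { ⟨p, v⟩ : p ∈ Δ^k, KL(p‖p̂) ≤ θ } = sup_{λ ≥ 0} g(λ)`, where
`g(λ) = −λθ − λ·log Σ_i p̂_i exp(−v_i/λ)` for `λ > 0` and `g(0) = min_i v_i`. -/
theorem kl_robust_duality
    (k : ℕ) (hk : 0 < k) (phat v : Fin k → ℝ)
    (hphat : phat ∈ stdSimplex ℝ (Fin k)) (hpos : ∀ i, 0 < phat i)
    (θ : ℝ) (hθ : 0 < θ) :
    let KL : (Fin k → ℝ) → ℝ := fun p => ∑ i, p i * Real.log (p i / phat i)
    let g : ℝ → ℝ := fun lam =>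
      if lam = 0 then
        Finset.univ.inf' (Finset.univ_nonempty_iff.mpr ⟨⟨0, hk⟩⟩) v
      else
        -lam * θ - lam * Real.log (∑ i, phat i * Real.exp (-v i / lam))
    sInf {x : ℝ | ∃ p ∈ stdSimplex ℝ (Fin k), KL p ≤ θ ∧ x = ∑ i, p i * v i}
      = sSup {y : ℝ | ∃ lam : ℝ, 0 ≤ lam ∧ y = g lam} := by
  intro KL g
  have : Nonempty (Fin k) := ⟨⟨0, hk⟩⟩
  obtain ⟨p, hp, hKL, lam, hlam, hval⟩ :=
    DiscreteKL.exists_sum_mul_eq_dualObjective v hphat.2 hpos hθ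
  refine csInf_eq_csSup_of_mem_of_forall_le ⟨p, hp, hKL, rfl⟩ ⟨lam, hlam, hval⟩ ?_
  rintro _ ⟨p', hp', hKL', rfl⟩ _ ⟨l, hl, rfl⟩
  exact DiscreteKL.dualObjective_le_sum_mul hpos hp' hKL' hl
end

section
/- Let l, u ∈ ℝ^k with 0 ≤ l_i ≤ u_i for all i, Σ_i l_i ≤ 1 ≤ Σ_i u_i, and let v ∈ ℝ^k satisfy v_1 ≥ v_2 ≥ … ≥ v_k. Let r be the smallest index j such that Σ_{i ≤ j} u_i + Σ_{i > j} l_i ≥ 1, and define p* by p*_i = u_i for i < r, p*_i = l_i for i > r, and p*_r = 1 − Σ_{i < r} u_i − Σ_{i > r} l_i. Then p* is feasible (l ≤ p* ≤ u componentwise and Σ_i p*_i = 1), and p* maximizes Σ_i p_i v_i over all p with l ≤ p ≤ u and Σ_i p_i = 1. -/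
/-!
Feasibility: the index `r` is the first one at which pushing all mass up to `u` on the
indices `≤ r` overshoots `1`, so at the predecessor of `r` (or, when `r` is the least index,
at `l` itself) the total mass is still at most `1`; these two inequalities say exactly that the
residual mass `p*_r` lies in `[l_r, u_r]`.

Optimality is an exchange argument: any feasible `p` has `p ≤ p*` strictly below `r` and
`p ≥ p*` strictly above `r`, so `(p*_i - p_i)(v_i - v_r) ≥ 0` for every `i`, and summing,
using `Σ (p*_i - p_i) = 0`, gives `Σ p_i v_i ≤ Σ p*_i v_i`.
-/

open Finset

section SplitAtIndex

variable {ι M : Type*} [Fintype ι] [LinearOrder ι] [AddCommMonoid M]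

theorem sum_filter_le_eq_sum_filter_lt_add (f : ι → M) (r : ι) :
    ∑ i with i ≤ r, f i = ∑ i with i < r, f i + f r := by
  have hfilter : univ.filter (· ≤ r) = insert r (univ.filter (· < r)) := by
    ext i; simp [le_iff_lt_or_eq, or_comm]
  rw [hfilter, sum_insert (by simp), add_comm]

theorem sum_eq_sum_filter_lt_add_add_sum_filter_gt (f : ι → M) (r : ι) :
    ∑ i, f i = ∑ i with i < r, f i + f r + ∑ i with r < i, f i := by
  rw [← sum_filter_le_eq_sum_filter_lt_add, ← sum_filter_add_sum_filter_not univ (· ≤ r)]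
  simp only [not_le]

theorem sum_filter_le_add_sum_filter_gt_of_covBy {j r : ι} (h : j ⋖ r) (f g : ι → M) :
    ∑ i with i ≤ j, f i + ∑ i with j < i, g i
      = ∑ i with i < r, f i + g r + ∑ i with r < i, g i := by
  have hle : univ.filter (· ≤ j) = univ.filter (· < r) := by
    ext i; simp [h.le_iff_lt_left]
  have hgt : univ.filter (j < ·) = univ.filter (r ≤ ·) := by
    ext i; simp [h.lt_iff_le_right]
  have hge : ∑ i with r ≤ i, g i = g r + ∑ i with r < i, g i := by
    have hfilter : univ.filter (r ≤ ·) = insert r (univ.filter (r < ·)) := by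
      ext i; simp [le_iff_lt_or_eq, or_comm, eq_comm]
    rw [hfilter, sum_insert (by simp)]
  rw [hle, hgt, hge, add_assoc]

theorem sum_filter_lt_add_add_sum_filter_gt_le [Preorder M] {c : M} (u l : ι → M) (r : ι)
    (hl : ∑ i, l i ≤ c)
    (hprev : ∀ j < r, ∑ i with i ≤ j, u i + ∑ i with j < i, l i ≤ c) :
    ∑ i with i < r, u i + l r + ∑ i with r < i, l i ≤ c := by
  by_cases hmin : IsMin r
  · have hempty : ∀ f : ι → M, ∑ i with i < r, f i = 0 := fun f =>
      sum_eq_zero fun i hi => absurd (mem_filter.1 hi).2 hmin.not_lt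
    rwa [hempty, ← hempty l, ← sum_eq_sum_filter_lt_add_add_sum_filter_gt]
  · obtain ⟨b, hb⟩ := not_isMin_iff.1 hmin
    obtain ⟨j, -, hj⟩ := exists_le_covBy_of_lt hb
    rw [← sum_filter_le_add_sum_filter_gt_of_covBy hj]
    exact hprev j hj.lt

end SplitAtIndex

theorem sum_mul_le_sum_mul_of_antitone_of_crossing {ι R : Type*} [Fintype ι] [LinearOrder ι]
    [CommRing R] [LinearOrder R] [IsStrictOrderedRing R] {p q v : ι → R} (hv : Antitone v)
    (r : ι) (hsum : ∑ i, p i = ∑ i, q i) (hlt : ∀ i < r, p i ≤ q i)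
    (hgt : ∀ i, r < i → q i ≤ p i) :
    ∑ i, p i * v i ≤ ∑ i, q i * v i := by
  have hterm : ∀ i ∈ univ, 0 ≤ (q i - p i) * (v i - v r) := by
    intro i _
    rcases lt_trichotomy i r with h | rfl | h
    · exact mul_nonneg (sub_nonneg.2 (hlt i h)) (sub_nonneg.2 (hv h.le))
    · simp
    · exact mul_nonneg_of_nonpos_of_nonpos (sub_nonpos.2 (hgt i h)) (sub_nonpos.2 (hv h.le))
  have hdiff : ∑ i, q i * v i - ∑ i, p i * v i = ∑ i, (q i - p i) * (v i - v r) := by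
    simp only [sub_mul, mul_sub, sum_sub_distrib, ← sum_mul, hsum]
    abel
  exact sub_nonneg.1 (hdiff ▸ sum_nonneg hterm)

theorem order_maximizing_threshold_general
    (k : ℕ) (l u v : Fin k → ℝ)
    (hlu : ∀ i, l i ≤ u i)
    (hsl : ∑ i, l i ≤ 1)
    (hv : Antitone v)
    (r : Fin k)
    (hr : 1 ≤ (∑ i ∈ Finset.univ.filter (fun i => i ≤ r), u i)
            + ∑ i ∈ Finset.univ.filter (fun i => r < i), l i)
    (hrmin : ∀ j : Fin k, j < r →
      (∑ i ∈ Finset.univ.filter (fun i => i ≤ j), u i)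
        + (∑ i ∈ Finset.univ.filter (fun i => j < i), l i) < 1) :
    let pstar : Fin k → ℝ := fun i =>
      if i < r then u i
      else if r < i then l i
      else 1 - (∑ j ∈ Finset.univ.filter (fun j => j < r), u j)
             - (∑ j ∈ Finset.univ.filter (fun j => r < j), l j)
    (∀ i, l i ≤ pstar i ∧ pstar i ≤ u i) ∧ (∑ i, pstar i) = 1 ∧
      ∀ p : Fin k → ℝ, (∀ i, l i ≤ p i ∧ p i ≤ u i) → (∑ i, p i) = 1 →
        (∑ i, p i * v i) ≤ ∑ i, pstar i * v i := by
  intro pstar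
  set A := ∑ j ∈ univ.filter (fun j => j < r), u j
  set B := ∑ j ∈ univ.filter (fun j => r < j), l j
  have hupper : 1 ≤ A + u r + B := by rwa [sum_filter_le_eq_sum_filter_lt_add] at hr
  have hlower : A + l r + B ≤ 1 :=
    sum_filter_lt_add_add_sum_filter_gt_le u l r hsl fun j hj => (hrmin j hj).le
  have hpstar_lt : ∀ i < r, pstar i = u i := fun i h => if_pos h
  have hpstar_gt : ∀ i, r < i → pstar i = l i := fun i h => by simp [pstar, h, h.not_gt]
  have hpstar_r : pstar r = 1 - A - B := (if_neg (lt_irrefl r)).trans (if_neg (lt_irrefl r))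
  have hfeas : ∀ i, l i ≤ pstar i ∧ pstar i ≤ u i := by
    intro i
    rcases lt_trichotomy i r with h | rfl | h
    · rw [hpstar_lt i h]; exact ⟨hlu i, le_rfl⟩
    · rw [hpstar_r]; constructor <;> linarith
    · rw [hpstar_gt i h]; exact ⟨le_rfl, hlu i⟩
  have hsum : ∑ i, pstar i = 1 := by
    rw [sum_eq_sum_filter_lt_add_add_sum_filter_gt _ r, hpstar_r,
      sum_congr rfl fun i hi => hpstar_lt i (mem_filter.1 hi).2,
      sum_congr rfl fun i hi => hpstar_gt i (mem_filter.1 hi).2]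
    ring
  refine ⟨hfeas, hsum, fun p hp hp1 => ?_⟩
  exact sum_mul_le_sum_mul_of_antitone_of_crossing hv r (hp1.trans hsum.symm)
    (fun i h => hpstar_lt i h ▸ (hp i).2) (fun i h => hpstar_gt i h ▸ (hp i).1)

/-- **Order-maximizing (threshold) distribution in bounded-parameter MDPs.**
Given componentwise bounds `0 ≤ l ≤ u` with `Σ l ≤ 1 ≤ Σ u` and values
`v_1 ≥ v_2 ≥ … ≥ v_k` (i.e. `v` antitone in the index), let `r` be the smallest index `j`
with `Σ_{i ≤ j} u_i + Σ_{i > j} l_i ≥ 1`, and define `p*` by assigning `u_i` below `r`,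
`l_i` above `r`, and the remaining mass at `r`.  Then `p*` is feasible and maximizes
`⟨p, v⟩` over the box `[l, u]` intersected with the probability simplex. -/
theorem order_maximizing_threshold
    (k : ℕ) (l u v : Fin k → ℝ)
    (hl0 : ∀ i, 0 ≤ l i) (hlu : ∀ i, l i ≤ u i)
    (hsl : ∑ i, l i ≤ 1) (hsu : 1 ≤ ∑ i, u i)
    (hv : Antitone v)
    (r : Fin k)
    (hr : 1 ≤ (∑ i ∈ Finset.univ.filter (fun i => i ≤ r), u i)
            + ∑ i ∈ Finset.univ.filter (fun i => r < i), l i)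
    (hrmin : ∀ j : Fin k, j < r →
      (∑ i ∈ Finset.univ.filter (fun i => i ≤ j), u i)
        + (∑ i ∈ Finset.univ.filter (fun i => j < i), l i) < 1) :
    let pstar : Fin k → ℝ := fun i =>
      if i < r then u i
      else if r < i then l i
      else 1 - (∑ j ∈ Finset.univ.filter (fun j => j < r), u j)
             - (∑ j ∈ Finset.univ.filter (fun j => r < j), l j)
    (∀ i, l i ≤ pstar i ∧ pstar i ≤ u i) ∧ (∑ i, pstar i) = 1 ∧
      ∀ p : Fin k → ℝ, (∀ i, l i ≤ p i ∧ p i ≤ u i) → (∑ i, p i) = 1 →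
        (∑ i, p i * v i) ≤ ∑ i, pstar i * v i :=
  order_maximizing_threshold_general k l u v hlu hsl hv r hr hrmin
end

section
/- Let S and A be nonempty finite sets, γ ∈ [0,1), R : S×A → ℝ, and for each (s,a) ∈ S×A let P_{sa} be a nonempty subset of the probability simplex Δ^{|S|} over S. Define the robust Bellman operator T on ℝ^S by (T V)(s) = max_{a∈A} ( R(s,a) + γ · inf_{p ∈ P_{sa}} Σ_{s'∈S} p(s')·V(s') ). Then T is a γ-contraction with respect to the supremum norm, i.e. ‖T V − T W‖_∞ ≤ γ·‖V − W‖_∞ for all V, W ∈ ℝ^S; consequently T has a unique fixed point V* ∈ ℝ^S. -/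
/-- **The robust Bellman operator is a `γ`-contraction in the sup norm.**
For finite `S`, `A`, discount `γ ∈ [0,1)`, rewards `R` and nonempty `(s,a)`-rectangular
uncertainty sets `P s a ⊆ Δ^{|S|}`, the operator
`(T V)(s) = max_a (R(s,a) + γ·inf_{p ∈ P s a} Σ_{s'} p(s')·V(s'))` satisfies
`‖T V − T W‖_∞ ≤ γ‖V − W‖_∞`, and hence has a unique fixed point. -/
theorem robust_bellman_contraction
    (S A : Type*) [Fintype S] [Fintype A] [Nonempty S] [Nonempty A]
    (γ : ℝ) (hγ0 : 0 ≤ γ) (hγ1 : γ < 1)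
    (R : S → A → ℝ)
    (P : S → A → Set (S → ℝ))
    (hPne : ∀ s a, (P s a).Nonempty)
    (hPsub : ∀ s a, P s a ⊆ stdSimplex ℝ S) :
    let T : (S → ℝ) → (S → ℝ) := fun V s =>
      Finset.univ.sup' Finset.univ_nonempty (fun a =>
        R s a + γ * sInf {x : ℝ | ∃ p ∈ P s a, x = ∑ s', p s' * V s'})
    (∀ V W : S → ℝ,
      Finset.univ.sup' Finset.univ_nonempty (fun s => |T V s - T W s|)
        ≤ γ * Finset.univ.sup' Finset.univ_nonempty (fun s => |V s - W s|)) ∧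
    ∃! Vstar : S → ℝ, T Vstar = Vstar := by
  intro T
  -- notation for sets of expected values
  set X : S → A → (S → ℝ) → Set ℝ :=
    fun s a V => {x : ℝ | ∃ p ∈ P s a, x = ∑ s', p s' * V s'} with hX
  have hXne : ∀ s a V, (X s a V).Nonempty := by
    intro s a V
    obtain ⟨p, hp⟩ := hPne s a
    exact ⟨_, p, hp, rfl⟩
  have hXbdd : ∀ s a V, BddBelow (X s a V) := by
    intro s a V
    refine ⟨-(Finset.univ.sup' Finset.univ_nonempty fun s' => |V s'|), ?_⟩
    rintro x ⟨p, hp, rfl⟩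
    obtain ⟨hp0, hp1⟩ := hPsub s a hp
    set C := Finset.univ.sup' Finset.univ_nonempty fun s' => |V s'| with hC
    calc -C = ∑ s', p s' * (-C) := by
          rw [← Finset.sum_mul, hp1, one_mul]
      _ ≤ ∑ s', p s' * V s' := by
          refine Finset.sum_le_sum fun s' _ => ?_
          have h1 : -C ≤ V s' := by
            have hC' : |V s'| ≤ C := Finset.le_sup' (fun s' => |V s'|) (Finset.mem_univ s')
            linarith [neg_abs_le (V s')]
          exact mul_le_mul_of_nonneg_left h1 (hp0 s')
  -- key bound on infima
  have hInf : ∀ (V W : S → ℝ) (s : S) (a : A),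
      sInf (X s a V) ≤ sInf (X s a W) +
        Finset.univ.sup' Finset.univ_nonempty (fun s => |V s - W s|) := by
    intro V W s a
    set M := Finset.univ.sup' Finset.univ_nonempty (fun s => |V s - W s|) with hM
    have h : sInf (X s a V) - M ≤ sInf (X s a W) := by
      refine le_csInf (hXne s a W) ?_
      rintro x ⟨p, hp, rfl⟩
      obtain ⟨hp0, hp1⟩ := hPsub s a hp
      have hle : ∑ s', p s' * V s' ≤ (∑ s', p s' * W s') + M := by
        have : ∑ s', p s' * V s' ≤ ∑ s', (p s' * W s' + p s' * M) := by
          refine Finset.sum_le_sum fun s' _ => ?_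
          have hVW : V s' ≤ W s' + M := by
            have hle : |V s' - W s'| ≤ M :=
              Finset.le_sup' (fun s => |V s - W s|) (Finset.mem_univ s')
            linarith [(abs_le.mp hle).2]
          calc p s' * V s' ≤ p s' * (W s' + M) :=
                mul_le_mul_of_nonneg_left hVW (hp0 s')
            _ = p s' * W s' + p s' * M := by ring
        calc ∑ s', p s' * V s' ≤ ∑ s', (p s' * W s' + p s' * M) := this
          _ = (∑ s', p s' * W s') + (∑ s', p s') * M := by
              rw [Finset.sum_add_distrib, Finset.sum_mul]
          _ = (∑ s', p s' * W s') + M := by rw [hp1, one_mul]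
      have := csInf_le (hXbdd s a V) (⟨p, hp, rfl⟩ : ∑ s', p s' * V s' ∈ X s a V)
      linarith
    linarith
  have hMnn : ∀ V W : S → ℝ,
      0 ≤ Finset.univ.sup' Finset.univ_nonempty (fun s => |V s - W s|) := by
    intro V W
    exact le_trans (abs_nonneg _)
      (Finset.le_sup' (fun s => |V s - W s|) (Finset.mem_univ (Classical.arbitrary S)))
  -- pointwise bound on T
  have hTpt : ∀ (V W : S → ℝ) (s : S),
      T V s - T W s ≤ γ * Finset.univ.sup' Finset.univ_nonempty (fun s => |V s - W s|) := by
    intro V W s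
    set M := Finset.univ.sup' Finset.univ_nonempty (fun s => |V s - W s|) with hM
    have : T V s ≤ T W s + γ * M := by
      refine Finset.sup'_le _ _ fun a _ => ?_
      have h1 := hInf V W s a
      have h2 : R s a + γ * sInf (X s a W) ≤ T W s :=
        Finset.le_sup' (fun a => R s a + γ * sInf (X s a W)) (Finset.mem_univ a)
      have h3 : γ * sInf (X s a V) ≤ γ * (sInf (X s a W) + M) :=
        mul_le_mul_of_nonneg_left h1 hγ0
      show R s a + γ * sInf (X s a V) ≤ T W s + γ * M
      nlinarith
    linarith
  have habs : ∀ (V W : S → ℝ) (s : S),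
      |T V s - T W s| ≤ γ * Finset.univ.sup' Finset.univ_nonempty (fun s => |V s - W s|) := by
    intro V W s
    rw [abs_sub_le_iff]
    constructor
    · exact hTpt V W s
    · have := hTpt W V s
      have hsymm : (Finset.univ.sup' Finset.univ_nonempty (fun s => |W s - V s|))
          = Finset.univ.sup' Finset.univ_nonempty (fun s => |V s - W s|) := by
        congr 1; funext s; rw [abs_sub_comm]
      rw [hsymm] at this
      exact this
  have hcontr : ∀ V W : S → ℝ,
      Finset.univ.sup' Finset.univ_nonempty (fun s => |T V s - T W s|)
        ≤ γ * Finset.univ.sup' Finset.univ_nonempty (fun s => |V s - W s|) :=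
    fun V W => Finset.sup'_le _ _ fun s _ => habs V W s
  refine ⟨hcontr, ?_⟩
  -- fixed point via Banach
  have hdist : ∀ V W : S → ℝ, dist (T V) (T W) ≤ γ * dist V W := by
    intro V W
    rw [dist_pi_le_iff (by positivity)]
    intro s
    rw [Real.dist_eq]
    refine le_trans (habs V W s) (mul_le_mul_of_nonneg_left ?_ hγ0)
    refine Finset.sup'_le _ _ fun s' _ => ?_
    rw [← Real.dist_eq]
    exact dist_le_pi_dist V W s'
  set K : NNReal := ⟨γ, hγ0⟩ with hK
  have hlip : LipschitzWith K T :=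
    LipschitzWith.of_dist_le_mul fun V W => hdist V W
  have hc : ContractingWith K T := ⟨by exact_mod_cast hγ1, hlip⟩
  exact ⟨hc.fixedPoint T, hc.fixedPoint_isFixedPt,
    fun y hy => hc.fixedPoint_unique hy⟩
end

section
/- Let A be a nonempty finite set, k ≥ 1, and let C be a nonempty convex compact subset of (Δ^k)^A (an s-rectangular uncertainty set for one state, allowing correlation across actions). Let r ∈ ℝ^A, v ∈ ℝ^k, γ ≥ 0. Then max over π ∈ Δ^{|A|} of min over p = (p_a)_{a∈A} ∈ C of Σ_{a∈A} π_a·( r_a + γ·Σ_i p_a(i)·v_i ) equals min over p ∈ C of max_{a∈A} ( r_a + γ·Σ_i p_a(i)·v_i ). -/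
/-!
The payoff `(p, π) ↦ Σ_a π_a (r_a + γ⟨p_a, v⟩)` is affine in the transition family `p` and
linear in the policy `π`, and both range over compact convex sets, so Sion's minimax theorem
gives a saddle point `(p₀, π₀)`. Its value is the max–min value, attained at `π₀`; since a
linear function on the simplex is maximised at a vertex, i.e. at a deterministic action, it is
also `min_p max_a (r_a + γ⟨p_a, v⟩)`, attained at `p₀`.
-/

open Finset Matrix

section Saddle

variable {E F : Type*} {X : Set E} {Y : Set F} {f : E → F → ℝ} {a : E} {b : F}

theorem IsSaddlePointOn.isGreatest_sInf (h : IsSaddlePointOn X Y f a b) (ha : a ∈ X)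
    (hb : b ∈ Y) (hbdd : ∀ y ∈ Y, BddBelow {c | ∃ x ∈ X, c = f x y}) :
    IsGreatest {d | ∃ y ∈ Y, d = sInf {c | ∃ x ∈ X, c = f x y}} (f a b) := by
  have hb_min : IsLeast {c | ∃ x ∈ X, c = f x b} (f a b) :=
    ⟨⟨a, ha, rfl⟩, by rintro _ ⟨x, hx, rfl⟩; exact h x hx b hb⟩
  refine ⟨⟨b, hb, hb_min.csInf_eq.symm⟩, ?_⟩
  rintro _ ⟨y, hy, rfl⟩
  exact (csInf_le (hbdd y hy) ⟨a, ha, rfl⟩).trans (h a ha y hy)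

end Saddle

section StdSimplex

variable {ι E : Type*} [Fintype ι] [Nonempty ι]

theorem dotProduct_le_sup'_of_mem_stdSimplex {π : ι → ℝ} (hπ : π ∈ stdSimplex ℝ ι)
    (y : ι → ℝ) : π ⬝ᵥ y ≤ univ.sup' univ_nonempty y :=
  calc π ⬝ᵥ y ≤ ∑ a, π a * univ.sup' univ_nonempty y :=
        sum_le_sum fun a _ => mul_le_mul_of_nonneg_left (le_sup' y (mem_univ a)) (hπ.1 a)
    _ = univ.sup' univ_nonempty y := by rw [← sum_mul, hπ.2, one_mul]

theorem sup'_le_of_forall_mem_stdSimplex {y : ι → ℝ} {c : ℝ}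
    (h : ∀ π ∈ stdSimplex ℝ ι, π ⬝ᵥ y ≤ c) : univ.sup' univ_nonempty y ≤ c :=
  sup'_le _ _ fun a _ => by
    classical
    simpa using h _ (single_mem_stdSimplex ℝ a)

theorem IsSaddlePointOn.isLeast_sup' {X : Set E} {F : E → ι → ℝ} {a : E} {π₀ : ι → ℝ}
    (h : IsSaddlePointOn X (stdSimplex ℝ ι) (fun x π => π ⬝ᵥ F x) a π₀)
    (ha : a ∈ X) (hπ₀ : π₀ ∈ stdSimplex ℝ ι) :
    IsLeast {c | ∃ x ∈ X, c = univ.sup' univ_nonempty (F x)} (π₀ ⬝ᵥ F a) := by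
  refine ⟨⟨a, ha, le_antisymm (dotProduct_le_sup'_of_mem_stdSimplex hπ₀ _) ?_⟩, ?_⟩
  · exact sup'_le_of_forall_mem_stdSimplex fun π hπ => h a ha π hπ
  · rintro _ ⟨x, hx, rfl⟩
    exact (h x hx π₀ hπ₀).trans (dotProduct_le_sup'_of_mem_stdSimplex hπ₀ _)

variable [TopologicalSpace E] [AddCommGroup E] [Module ℝ E] [IsTopologicalAddGroup E]
  [ContinuousSMul ℝ E] {X : Set E}

theorem exists_isSaddlePointOn_dotProduct (F : E →ᵃ[ℝ] ι → ℝ) (hF : Continuous F)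
    (hXne : X.Nonempty) (hXc : Convex ℝ X) (hXk : IsCompact X) :
    ∃ a ∈ X, ∃ π₀ ∈ stdSimplex ℝ ι,
      IsSaddlePointOn X (stdSimplex ℝ ι) (fun x π => π ⬝ᵥ F x) a π₀ := by
  classical
  exact Sion.exists_isSaddlePointOn hXne hXc hXk
    (fun _ _ => (continuous_const.dotProduct hF).lowerSemicontinuous.lowerSemicontinuousOn _)
    (fun π _ => (((dotProductBilin ℝ ℝ π).convexOn convex_univ).comp_affineMap F).subset
      (Set.subset_univ _) hXc |>.quasiconvexOn)
    (convex_stdSimplex ℝ ι) ⟨_, single_mem_stdSimplex ℝ (Classical.arbitrary ι)⟩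
    (isCompact_stdSimplex ℝ ι)
    (fun _ _ =>
      (continuous_id.dotProduct continuous_const).upperSemicontinuous.upperSemicontinuousOn _)
    (fun x _ =>
      (((dotProductBilin ℝ ℝ).flip (F x)).concaveOn (convex_stdSimplex ℝ ι)).quasiconcaveOn)

theorem exists_isGreatest_sInf_dotProduct_isLeast_sup' (F : E →ᵃ[ℝ] ι → ℝ) (hF : Continuous F)
    (hXne : X.Nonempty) (hXc : Convex ℝ X) (hXk : IsCompact X) :
    ∃ m : ℝ, IsGreatest {d | ∃ π ∈ stdSimplex ℝ ι, d = sInf {c | ∃ x ∈ X, c = π ⬝ᵥ F x}} m ∧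
      IsLeast {c | ∃ x ∈ X, c = univ.sup' univ_nonempty (F x)} m := by
  obtain ⟨a, ha, π₀, hπ₀, h⟩ := exists_isSaddlePointOn_dotProduct F hF hXne hXc hXk
  refine ⟨_, h.isGreatest_sInf ha hπ₀ ?_, h.isLeast_sup' ha hπ₀⟩
  intro π _
  obtain ⟨c, hc⟩ := (hXk.image (continuous_const.dotProduct hF)).bddBelow
  exact ⟨c, by rintro _ ⟨x, hx, rfl⟩; exact hc ⟨x, hx, rfl⟩⟩

end StdSimplex

def qValue {A S : Type*} [Fintype S] (r : A → ℝ) (γ : ℝ) (v : S → ℝ) :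
    (A → S → ℝ) →ᵃ[ℝ] (A → ℝ) where
  toFun p a := r a + γ * ∑ i, p a i * v i
  linear :=
    { toFun p a := γ * ∑ i, p a i * v i
      map_add' p q := by
        ext a
        simp only [Pi.add_apply, add_mul, sum_add_distrib, mul_add]
      map_smul' c p := by
        ext a
        simp only [Pi.smul_apply, smul_eq_mul, RingHom.id_apply, mul_assoc, ← mul_sum]
        ring }
  map_vadd' p q := by
    ext a
    simp only [vadd_eq_add, Pi.add_apply, LinearMap.coe_mk, AddHom.coe_mk, add_mul,
      sum_add_distrib]
    ring

theorem s_rectangular_minimax_general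
    (A : Type*) [Fintype A] [Nonempty A]
    (k : ℕ)
    (C : Set (A → Fin k → ℝ))
    (hCne : C.Nonempty) (hCconv : Convex ℝ C) (hCcomp : IsCompact C)
    (r : A → ℝ) (v : Fin k → ℝ) (γ : ℝ) :
    ∃ m : ℝ,
      IsGreatest {x : ℝ | ∃ π ∈ stdSimplex ℝ A,
          x = sInf {y : ℝ | ∃ p ∈ C, y = ∑ a, π a * (r a + γ * ∑ i, p a i * v i)}} m ∧
      IsLeast {y : ℝ | ∃ p ∈ C,
          y = Finset.univ.sup' Finset.univ_nonempty
                (fun a => r a + γ * ∑ i, p a i * v i)} m :=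
  exists_isGreatest_sInf_dotProduct_isLeast_sup' (qValue r γ v)
    (qValue r γ v).continuous_of_finiteDimensional hCne hCconv hCcomp

/-- **Minimax exchange for `s`-rectangular robust Bellman updates.**
Let `C` be a nonempty convex compact set of families `(p_a)_{a∈A}` of probability
vectors (an `s`-rectangular uncertainty set, possibly correlated across actions).  Then
`max_{π ∈ Δ^{|A|}} min_{p ∈ C} Σ_a π_a (r_a + γ⟨p_a, v⟩)
  = min_{p ∈ C} max_a (r_a + γ⟨p_a, v⟩)`:
there exists a common value that is the greatest of the outer (max–min) values and the
least of the inner (min–max) values. -/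
theorem s_rectangular_minimax
    (A : Type*) [Fintype A] [Nonempty A]
    (k : ℕ) (hk : 1 ≤ k)
    (C : Set (A → Fin k → ℝ))
    (hCne : C.Nonempty) (hCconv : Convex ℝ C) (hCcomp : IsCompact C)
    (hCsub : ∀ p ∈ C, ∀ a, p a ∈ stdSimplex ℝ (Fin k))
    (r : A → ℝ) (v : Fin k → ℝ) (γ : ℝ) (hγ : 0 ≤ γ) :
    ∃ m : ℝ,
      IsGreatest {x : ℝ | ∃ π ∈ stdSimplex ℝ A,
          x = sInf {y : ℝ | ∃ p ∈ C, y = ∑ a, π a * (r a + γ * ∑ i, p a i * v i)}} m ∧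
      IsLeast {y : ℝ | ∃ p ∈ C,
          y = Finset.univ.sup' Finset.univ_nonempty
                (fun a => r a + γ * ∑ i, p a i * v i)} m :=
  s_rectangular_minimax_general A k C hCne hCconv hCcomp r v γ
end

section
/- Let p̂ ∈ Δ^k, v ∈ ℝ^k, and α ∈ (0,1]. Then the minimum over p ∈ Δ^k satisfying p_i ≤ p̂_i/α for all i, of Σ_i p_i v_i, equals the supremum over t ∈ ℝ of ( t − (1/α)·Σ_i p̂_i·max(t − v_i, 0) ). In other words, the worst-case expectation over the uncertainty set {p ∈ Δ^k : 0 ≤ p ≤ p̂/α} coincides with the Rockafellar–Uryasev representation of the level-α conditional value-at-risk of v under p̂. -/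
open Finset


/-- **Osogami's uncertainty set and CVaR (Rockafellar–Uryasev) duality.**
For `p̂ ∈ Δ^k`, `v ∈ ℝ^k` and `α ∈ (0,1]`, the minimum of `⟨p, v⟩` over
`{p ∈ Δ^k : p_i ≤ p̂_i/α ∀i}` is attained and equals
`sup_{t ∈ ℝ} ( t − (1/α)·Σ_i p̂_i·max(t − v_i, 0) )`. -/
theorem robust_expectation_eq_cvar
    (k : ℕ) (hk : 0 < k) (phat v : Fin k → ℝ)
    (hphat : phat ∈ stdSimplex ℝ (Fin k))
    (α : ℝ) (hα0 : 0 < α) (hα1 : α ≤ 1) :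
    IsLeast {x : ℝ | ∃ p ∈ stdSimplex ℝ (Fin k),
        (∀ i, p i ≤ phat i / α) ∧ x = ∑ i, p i * v i}
      (sSup {y : ℝ | ∃ t : ℝ, y = t - (1 / α) * ∑ i, phat i * max (t - v i) 0}) := by
  obtain ⟨hp0, hp1⟩ := hphat
  have hα1' : (1:ℝ) ≤ 1 / α := one_le_one_div hα0 hα1
  set q : Fin k → ℝ := fun i => phat i / α with hq
  have hq0 : ∀ i, 0 ≤ q i := fun i => div_nonneg (hp0 i) hα0.le
  have hqsum : ∑ i, q i = 1 / α := by
    simp only [hq, ← Finset.sum_div, hp1]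
  -- rewrite the RU objective
  have hRU : ∀ t : ℝ, t - (1/α) * ∑ i, phat i * max (t - v i) 0
      = t - ∑ i, q i * max (t - v i) 0 := by
    intro t
    rw [Finset.mul_sum]
    congr 1
    refine Finset.sum_congr rfl fun i _ => ?_
    simp only [hq]; ring
  -- weak duality
  have weak : ∀ t : ℝ, ∀ p : Fin k → ℝ, (∀ i, 0 ≤ p i) → ∑ i, p i = 1 →
      (∀ i, p i ≤ q i) → t - ∑ i, q i * max (t - v i) 0 ≤ ∑ i, p i * v i := by
    intro t p hpp hps hpq
    have h2 : ∑ i, p i * (t - v i) ≤ ∑ i, q i * max (t - v i) 0 := by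
      refine Finset.sum_le_sum fun i _ => ?_
      calc p i * (t - v i) ≤ p i * max (t - v i) 0 :=
            mul_le_mul_of_nonneg_left (le_max_left _ _) (hpp i)
        _ ≤ q i * max (t - v i) 0 :=
            mul_le_mul_of_nonneg_right (hpq i) (le_max_right _ _)
    have h3 : ∑ i, p i * (t - v i) = t - ∑ i, p i * v i := by
      have : ∑ i, p i * (t - v i) = (∑ i, p i) * t - ∑ i, p i * v i := by
        rw [Finset.sum_mul, ← Finset.sum_sub_distrib]
        exact Finset.sum_congr rfl fun i _ => by ring
      rw [this, hps, one_mul]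
    linarith
  -- sorting
  set σ := Tuple.sort v with hσ
  have hmono : Monotone (v ∘ σ) := Tuple.monotone_sort v
  set Q : ℕ → ℝ := fun m => if h : m < k then q (σ ⟨m, h⟩) else 0 with hQ
  have hQ0 : ∀ m, 0 ≤ Q m := by
    intro m; simp only [hQ]
    split
    · exact hq0 _
    · exact le_refl 0
  set S : ℕ → ℝ := fun m => ∑ i ∈ Finset.range m, Q i with hS
  have hSmono : Monotone S := fun a b hab =>
    Finset.sum_le_sum_of_subset_of_nonneg (Finset.range_subset_range.2 hab) (fun i _ _ => hQ0 i)
  have hS0 : S 0 = 0 := by simp [hS]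
  have hQval : ∀ l : Fin k, Q (l : ℕ) = q (σ l) := by
    intro l; simp only [hQ, dif_pos l.isLt]
  have hSk : S k = 1 / α := by
    have hSkdef : S k = ∑ i ∈ Finset.range k, Q i := rfl
    rw [hSkdef, ← Fin.sum_univ_eq_sum_range Q k]
    rw [Finset.sum_congr rfl fun l _ => hQval l, Equiv.sum_comp σ q, hqsum]
  have hstep : ∀ l : Fin k, S ((l : ℕ) + 1) = S (l : ℕ) + q (σ l) := by
    intro l
    rw [hS]
    simp only [Finset.sum_range_succ, hQval l]
  -- the greedy distribution
  set p : Fin k → ℝ := fun i =>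
      min (S ((σ.symm i : ℕ) + 1)) 1 - min (S (σ.symm i : ℕ)) 1 with hp
  have hpσ : ∀ l : Fin k, p (σ l) = min (S ((l : ℕ) + 1)) 1 - min (S (l : ℕ)) 1 := by
    intro l; simp [hp, Equiv.symm_apply_apply]
  have hp0' : ∀ i, 0 ≤ p i := by
    intro i
    have := hSmono (Nat.le_succ (σ.symm i : ℕ))
    simp only [hp]
    have : min (S (σ.symm i : ℕ)) 1 ≤ min (S ((σ.symm i : ℕ) + 1)) 1 :=
      min_le_min this le_rfl
    linarith
  have hpq' : ∀ i, p i ≤ q i := by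
    intro i
    have key : ∀ l : Fin k, p (σ l) ≤ q (σ l) := by
      intro l
      rw [hpσ l]
      rcases le_or_gt (S (l : ℕ)) 1 with h | h
      · have h1 : min (S (l : ℕ)) 1 = S (l : ℕ) := min_eq_left h
        have h2 : min (S ((l : ℕ) + 1)) 1 ≤ S ((l : ℕ) + 1) := min_le_left _ _
        have := hstep l
        linarith
      · have h1 : min (S (l : ℕ)) 1 = 1 := min_eq_right h.le
        have h2 : min (S ((l : ℕ) + 1)) 1 ≤ 1 := min_le_right _ _
        have := hq0 (σ l)
        linarith
    have := key (σ.symm i)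
    simpa using this
  have hpsum : ∑ i, p i = 1 := by
    rw [← Equiv.sum_comp σ p]
    have : ∀ l : Fin k, p (σ l) =
        (fun m => min (S (m + 1)) 1 - min (S m) 1) (l : ℕ) := fun l => hpσ l
    rw [Finset.sum_congr rfl fun l _ => this l]
    rw [Fin.sum_univ_eq_sum_range (fun m => min (S (m + 1)) 1 - min (S m) 1) k]
    rw [Finset.sum_range_sub (fun m => min (S m) 1) k]
    rw [hS0, hSk]
    rw [min_eq_right hα1', min_eq_left zero_le_one]
    ring
  -- the optimal threshold
  have hex : ∃ m, 1 ≤ S (m + 1) := by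
    refine ⟨k - 1, ?_⟩
    rw [Nat.sub_add_cancel hk, hSk]
    exact hα1'
  set j := Nat.find hex with hj
  have hj1 : 1 ≤ S (j + 1) := Nat.find_spec hex
  have hjmin : ∀ m, m < j → S (m + 1) < 1 := by
    intro m hm
    have := Nat.find_min hex hm
    linarith [not_le.mp this]
  have hjk : j < k := by
    have h1 : j ≤ k - 1 := Nat.find_le (by
      rw [Nat.sub_add_cancel hk, hSk]; exact hα1')
    omega
  set J : Fin k := ⟨j, hjk⟩ with hJ
  set t₀ : ℝ := v (σ J) with ht₀
  -- termwise identity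
  have termwise : ∀ l : Fin k,
      q (σ l) * max (t₀ - v (σ l)) 0 = p (σ l) * (t₀ - v (σ l)) := by
    intro l
    rcases lt_trichotomy (l : ℕ) j with h | h | h
    · -- l < j
      have hle : v (σ l) ≤ t₀ := hmono (show l ≤ J from Fin.le_def.2 h.le)
      have hmax : max (t₀ - v (σ l)) 0 = t₀ - v (σ l) := max_eq_left (by linarith)
      have hS1 : S ((l : ℕ) + 1) < 1 := hjmin _ h
      have hS2 : S (l : ℕ) < 1 := lt_of_le_of_lt (hSmono (Nat.le_succ _)) hS1
      have hpl : p (σ l) = q (σ l) := by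
        rw [hpσ l, min_eq_left hS1.le, min_eq_left hS2.le, hstep l]; ring
      rw [hmax, hpl]
    · -- l = j
      have : l = J := Fin.ext h
      rw [this]
      simp [ht₀]
    · -- l > j
      have hle : t₀ ≤ v (σ l) := hmono (show J ≤ l from Fin.le_def.2 h.le)
      have hmax : max (t₀ - v (σ l)) 0 = 0 := max_eq_right (by linarith)
      have hSl : 1 ≤ S (l : ℕ) := le_trans hj1 (hSmono (by omega))
      have hSl1 : 1 ≤ S ((l : ℕ) + 1) := le_trans hSl (hSmono (Nat.le_succ _))
      have hpl : p (σ l) = 0 := by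
        rw [hpσ l, min_eq_right hSl, min_eq_right hSl1]; ring
      rw [hmax, hpl]
      ring
  -- strong duality at t₀
  have strong : t₀ - ∑ i, q i * max (t₀ - v i) 0 = ∑ i, p i * v i := by
    have e1 : ∑ i, q i * max (t₀ - v i) 0 = ∑ l, q (σ l) * max (t₀ - v (σ l)) 0 :=
      (Equiv.sum_comp σ (fun i => q i * max (t₀ - v i) 0)).symm
    have e2 : ∑ l, q (σ l) * max (t₀ - v (σ l)) 0 = ∑ l, p (σ l) * (t₀ - v (σ l)) :=
      Finset.sum_congr rfl fun l _ => termwise l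
    have e3 : ∑ l, p (σ l) * (t₀ - v (σ l)) = ∑ i, p i * (t₀ - v i) :=
      Equiv.sum_comp σ (fun i => p i * (t₀ - v i))
    have e4 : ∑ i, p i * (t₀ - v i) = t₀ - ∑ i, p i * v i := by
      have : ∑ i, p i * (t₀ - v i) = (∑ i, p i) * t₀ - ∑ i, p i * v i := by
        rw [Finset.sum_mul, ← Finset.sum_sub_distrib]
        exact Finset.sum_congr rfl fun i _ => by ring
      rw [this, hpsum, one_mul]
    rw [e1, e2, e3, e4]
    ring
  -- now conclude
  set RU : Set ℝ := {y : ℝ | ∃ t : ℝ, y = t - (1 / α) * ∑ i, phat i * max (t - v i) 0}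
    with hRUdef
  have hmemRU : (∑ i, p i * v i) ∈ RU := ⟨t₀, by rw [hRU t₀, strong]⟩
  have hub : ∀ y ∈ RU, y ≤ ∑ i, p i * v i := by
    rintro y ⟨t, rfl⟩
    rw [hRU t]
    exact weak t p hp0' hpsum hpq'
  have hsup : sSup RU = ∑ i, p i * v i := (IsGreatest.csSup_eq ⟨hmemRU, hub⟩)
  constructor
  · exact ⟨p, ⟨hp0', hpsum⟩, hpq', hsup⟩
  · rintro x ⟨p', ⟨hp'0, hp'1⟩, hp'q, rfl⟩
    refine csSup_le ⟨_, hmemRU⟩ ?_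
    rintro y ⟨t, rfl⟩
    rw [hRU t]
    exact weak t p' hp'0 hp'1 (fun i => hp'q i)
end

section
/- Let X and Y be nonempty finite sets, p ∈ Δ^X, q ∈ Δ^Y, and c : X×Y → ℝ. Then the minimum over all couplings γ of (p,q) (i.e. γ : X×Y → [0,∞) with Σ_y γ(x,y) = p(x) for all x and Σ_x γ(x,y) = q(y) for all y) of Σ_{x,y} c(x,y)·γ(x,y) equals the maximum over all pairs of functions ψ : X → ℝ, φ : Y → ℝ satisfying ψ(x) + φ(y) ≤ c(x,y) for all (x,y), of Σ_x p(x)·ψ(x) + Σ_y q(y)·φ(y). -/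
/-!
Weak duality is `ψ x + φ y ≤ c x y` integrated against a coupling. Conversely, if `s` lies
strictly below the optimal cost, then `(p, q, s)` lies outside the compact convex image of the
simplex `Δ^(X × Y)` under `γ ↦ (marginals of γ, cost of γ)`, and the coefficients of a separating
functional give a feasible pair of value above `s`. The dual supremum is attained: replacing `ψ`
by the `c`-transform of `φ` and then `φ` by the `c`-transform of `ψ`, after a shift by a constant,
does not decrease the value and bounds both potentials by `3 max |c|`, so the supremum may be taken
over a compact set.
-/

open Finset

theorem LinearMap.apply_prod_eq_sum_single {ι κ : Type*} [Fintype ι] [Fintype κ] [DecidableEq ι]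
    [DecidableEq κ] (f : (ι → ℝ) × (κ → ℝ) × ℝ →ₗ[ℝ] ℝ) (a : ι → ℝ) (b : κ → ℝ) (r : ℝ) :
    f (a, b, r) = ∑ i, a i * f (Pi.single i 1, 0, 0) + ∑ k, b k * f (0, Pi.single k 1, 0) +
      r * f (0, 0, 1) := by
  have hab : ((a, b, r) : (ι → ℝ) × (κ → ℝ) × ℝ) =
      ∑ i, a i • (Pi.single i 1, 0, 0) + ∑ k, b k • (0, Pi.single k 1, 0) + r • (0, 0, 1) := by
    ext <;> simp [Prod.fst_sum, Prod.snd_sum, Finset.sum_apply, Pi.single_apply]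
  rw [hab, map_add, map_add, map_sum, map_sum]
  simp only [map_smul, smul_eq_mul]

section CTransform

variable {X Y : Type*} [Fintype Y] [Nonempty Y] {c : X → Y → ℝ}

def cTransform (c : X → Y → ℝ) (φ : Y → ℝ) (x : X) : ℝ :=
  univ.inf' univ_nonempty fun y => c x y - φ y

theorem cTransform_add_le (φ : Y → ℝ) (x : X) (y : Y) : cTransform c φ x + φ y ≤ c x y := by
  have := inf'_le (fun y => c x y - φ y) (mem_univ y)
  rw [cTransform]; linarith

theorem le_cTransform {ψ : X → ℝ} {φ : Y → ℝ} (h : ∀ x y, ψ x + φ y ≤ c x y) (x : X) :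
    ψ x ≤ cTransform c φ x :=
  le_inf' _ _ fun y _ => le_sub_iff_add_le.2 (h x y)

theorem abs_cTransform_le {M B : ℝ} (hc : ∀ x y, |c x y| ≤ M) {φ : Y → ℝ}
    (hφ : ∀ y, |φ y| ≤ B) (x : X) : |cTransform c φ x| ≤ M + B := by
  obtain ⟨y, -, hy⟩ := exists_mem_eq_inf' univ_nonempty fun y => c x y - φ y
  rw [cTransform, hy]
  exact (abs_sub _ _).trans (add_le_add (hc x y) (hφ y))

theorem cTransform_le_add {M : ℝ} (hc : ∀ x y, |c x y| ≤ M) (φ : Y → ℝ) (x x' : X) :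
    cTransform c φ x ≤ cTransform c φ x' + 2 * M := by
  obtain ⟨y, -, hy⟩ := exists_mem_eq_inf' univ_nonempty fun y => c x' y - φ y
  have hx := cTransform_add_le (c := c) φ x y
  have hx' : cTransform c φ x' = c x' y - φ y := hy
  linarith [abs_le.1 (hc x y), abs_le.1 (hc x' y)]

end CTransform

section Duality

variable {X Y : Type*} [Fintype X] [Fintype Y] {p : X → ℝ} {q : Y → ℝ} {c : X → Y → ℝ}

def IsCoupling (p : X → ℝ) (q : Y → ℝ) (γ : X → Y → ℝ) : Prop :=
  (∀ x y, 0 ≤ γ x y) ∧ (∀ x, ∑ y, γ x y = p x) ∧ ∀ y, ∑ x, γ x y = q y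

def transportCost (c : X → Y → ℝ) (γ : X → Y → ℝ) : ℝ := ∑ x, ∑ y, c x y * γ x y

def dualValue (p : X → ℝ) (q : Y → ℝ) (ψ : X → ℝ) (φ : Y → ℝ) : ℝ :=
  ∑ x, p x * ψ x + ∑ y, q y * φ y

theorem isCoupling_mul (hp : p ∈ stdSimplex ℝ X) (hq : q ∈ stdSimplex ℝ Y) :
    IsCoupling p q fun x y => p x * q y :=
  ⟨fun x y => mul_nonneg (hp.1 x) (hq.1 y), fun x => by rw [← mul_sum, hq.2, mul_one],
    fun y => by rw [← sum_mul, hp.2, one_mul]⟩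

theorem isCompact_setOf_isCoupling (p : X → ℝ) (q : Y → ℝ) :
    IsCompact {γ | IsCoupling p q γ} := by
  have hclosed : IsClosed {γ | IsCoupling p q γ} := by
    simp only [IsCoupling, Set.ofPred_and, Set.ofPred_forall]
    refine (isClosed_iInter fun x => isClosed_iInter fun y => isClosed_le ?_ ?_).inter
      ((isClosed_iInter fun x => isClosed_eq ?_ ?_).inter
        (isClosed_iInter fun y => isClosed_eq ?_ ?_)) <;> fun_prop
  refine (isCompact_univ_pi fun x => isCompact_univ_pi fun _ => isCompact_Icc (a := 0) (b := p x))
    |>.of_isClosed_subset hclosed fun γ ⟨hγ, hp, _⟩ => ?_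
  simp only [Set.mem_univ_pi, Set.mem_Icc]
  exact fun x y => ⟨hγ x y, hp x ▸ single_le_sum (fun y _ => hγ x y) (mem_univ y)⟩

theorem continuous_transportCost (c : X → Y → ℝ) : Continuous (transportCost c) := by
  unfold transportCost; fun_prop

theorem dualValue_le_transportCost {γ : X → Y → ℝ} (hγ : IsCoupling p q γ)
    {ψ : X → ℝ} {φ : Y → ℝ} (h : ∀ x y, ψ x + φ y ≤ c x y) :
    dualValue p q ψ φ ≤ transportCost c γ := by
  obtain ⟨hγ, hp, hq⟩ := hγ
  calc dualValue p q ψ φ = ∑ x, ∑ y, γ x y * (ψ x + φ y) := by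
        simp only [dualValue, ← hp, ← hq, sum_mul, mul_add, sum_add_distrib]
        exact congrArg _ sum_comm
    _ ≤ ∑ x, ∑ y, γ x y * c x y :=
        sum_le_sum fun x _ => sum_le_sum fun y _ => mul_le_mul_of_nonneg_left (h x y) (hγ x y)
    _ = transportCost c γ := by simp only [transportCost, mul_comm]

theorem dualValue_mono (hp : ∀ x, 0 ≤ p x) (hq : ∀ y, 0 ≤ q y) {ψ ψ' : X → ℝ} {φ φ' : Y → ℝ}
    (hψ : ∀ x, ψ x ≤ ψ' x) (hφ : ∀ y, φ y ≤ φ' y) :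
    dualValue p q ψ φ ≤ dualValue p q ψ' φ' := by
  unfold dualValue
  gcongr with x _ y _
  exacts [hp x, hψ x, hq y, hφ y]

theorem dualValue_sub_const_add_const (hp : ∑ x, p x = 1) (hq : ∑ y, q y = 1)
    (ψ : X → ℝ) (φ : Y → ℝ) (s : ℝ) :
    dualValue p q (fun x => ψ x - s) (fun y => φ y + s) = dualValue p q ψ φ := by
  simp only [dualValue, mul_sub, mul_add, sum_sub_distrib, sum_add_distrib, ← sum_mul, hp, hq]
  ring

def marginalsCost (c : X → Y → ℝ) : (X × Y → ℝ) →ₗ[ℝ] (X → ℝ) × (Y → ℝ) × ℝ :=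
  (LinearMap.pi fun x => ∑ y, LinearMap.proj (x, y)).prod
    ((LinearMap.pi fun y => ∑ x, LinearMap.proj (x, y)).prod (∑ z, c z.1 z.2 • LinearMap.proj z))

theorem marginalsCost_apply (c : X → Y → ℝ) (γ : X × Y → ℝ) :
    marginalsCost c γ = (fun x => ∑ y, γ (x, y), fun y => ∑ x, γ (x, y), ∑ z, c z.1 z.2 * γ z) := by
  ext <;> simp [marginalsCost]

theorem marginalsCost_single [DecidableEq X] [DecidableEq Y] (c : X → Y → ℝ) (x : X) (y : Y) :
    marginalsCost c (Pi.single (x, y) 1) = (Pi.single x 1, Pi.single y 1, c x y) := by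
  ext <;> simp [marginalsCost_apply, Pi.single_apply, ite_and, mul_ite, eq_comm]

theorem exists_lt_dualValue (hp : p ∈ stdSimplex ℝ X) (hq : q ∈ stdSimplex ℝ Y) {s : ℝ}
    (hs : ∀ γ, IsCoupling p q γ → s < transportCost c γ) :
    ∃ ψ φ, (∀ x y, ψ x + φ y ≤ c x y) ∧ s < dualValue p q ψ φ := by
  classical
  set K := marginalsCost c '' stdSimplex ℝ (X × Y)
  have hK : IsCompact K :=
    (isCompact_stdSimplex _ _).image (marginalsCost c).continuous_of_finiteDimensional
  have hz : (p, q, s) ∉ K := by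
    rintro ⟨γ, hγ, hcost⟩
    simp only [marginalsCost_apply, Prod.mk.injEq] at hcost
    obtain ⟨hγp, hγq, rfl⟩ := hcost
    refine (hs (fun x y => γ (x, y)) ⟨fun x y => hγ.1 _, congrFun hγp, congrFun hγq⟩).ne ?_
    rw [transportCost, Fintype.sum_prod_type]
  obtain ⟨f, u, hfz, hfK⟩ :=
    geometric_hahn_banach_point_closed ((convex_stdSimplex ℝ _).linear_image _) hK.isClosed hz
  set ψ₀ : X → ℝ := fun x => f (Pi.single x 1, 0, 0)
  set φ₀ : Y → ℝ := fun y => f (0, Pi.single y 1, 0)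
  set t := f (0, 0, 1)
  have hf : ∀ a b r, f (a, b, r) = ∑ x, a x * ψ₀ x + ∑ y, b y * φ₀ y + r * t :=
    f.toLinearMap.apply_prod_eq_sum_single
  have hvertex : ∀ x y, u < ψ₀ x + φ₀ y + c x y * t := by
    intro x y
    have := hfK _ ⟨_, single_mem_stdSimplex ℝ (x, y), rfl⟩
    simpa [marginalsCost_single, hf, Pi.single_apply] using this
  have ht : 0 < t := by
    obtain ⟨γ, hγ⟩ : ∃ γ, IsCoupling p q γ := ⟨_, isCoupling_mul hp hq⟩
    have hγK : (p, q, transportCost c γ) ∈ K := by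
      refine ⟨fun z => γ z.1 z.2, ⟨fun z => hγ.1 _ _, ?_⟩, ?_⟩
      · rw [Fintype.sum_prod_type]; simp only [hγ.2.1, hp.2]
      · simp only [marginalsCost_apply, hγ.2.1, hγ.2.2, transportCost, Fintype.sum_prod_type]
    have := hfK _ hγK
    rw [hf] at this hfz
    nlinarith [hs γ hγ]
  -- Feasibility of this pair is `hvertex` divided by `t`; its value exceeds `s` by `hfz`.
  refine ⟨fun x => (u - ψ₀ x) / t, fun y => -φ₀ y / t, fun x y => ?_, ?_⟩
  · rw [← add_div, div_le_iff₀ ht]; linarith [hvertex x y]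
  · have : dualValue p q (fun x => (u - ψ₀ x) / t) (fun y => -φ₀ y / t) =
        (u - ∑ x, p x * ψ₀ x - ∑ y, q y * φ₀ y) / t := by
      simp only [dualValue, mul_div_assoc', ← sum_div, mul_sub, mul_neg, sum_sub_distrib,
        sum_neg_distrib, ← sum_mul, hp.2]
      ring
    rw [this, lt_div_iff₀ ht]; rw [hf] at hfz; linarith

theorem exists_bounded_dualValue_ge [Nonempty X] [Nonempty Y] (hp : p ∈ stdSimplex ℝ X)
    (hq : q ∈ stdSimplex ℝ Y) {M : ℝ} (hc : ∀ x y, |c x y| ≤ M) {ψ : X → ℝ} {φ : Y → ℝ}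
    (h : ∀ x y, ψ x + φ y ≤ c x y) :
    ∃ ψ' φ', (∀ x y, ψ' x + φ' y ≤ c x y) ∧ (∀ x, |ψ' x| ≤ 2 * M) ∧ (∀ y, |φ' y| ≤ 3 * M) ∧
      dualValue p q ψ φ ≤ dualValue p q ψ' φ' := by
  set s := cTransform c φ (Classical.arbitrary X)
  set ψ' : X → ℝ := fun x => cTransform c φ x - s
  have hψ' : ∀ x, |ψ' x| ≤ 2 * M := fun x => abs_sub_le_iff.2
    ⟨by linarith [cTransform_le_add hc φ x (Classical.arbitrary X)],
      by linarith [cTransform_le_add hc φ (Classical.arbitrary X) x]⟩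
  have hφ_le : ∀ y, φ y + s ≤ cTransform (flip c) ψ' y :=
    le_cTransform fun y x => by
      simp only [flip, ψ']; linarith [cTransform_add_le (c := c) φ x y]
  refine ⟨ψ', cTransform (flip c) ψ', fun x y => ?_, hψ', fun y => ?_, ?_⟩
  · exact (add_comm _ _).le.trans (cTransform_add_le (c := flip c) ψ' y x)
  · linarith [abs_cTransform_le (c := flip c) (fun y x => hc x y) hψ' y]
  · calc dualValue p q ψ φ ≤ dualValue p q (cTransform c φ) φ :=
          dualValue_mono hp.1 hq.1 (le_cTransform h) fun _ => le_rfl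
      _ = dualValue p q ψ' (fun y => φ y + s) :=
          (dualValue_sub_const_add_const hp.2 hq.2 _ _ _).symm
      _ ≤ dualValue p q ψ' (cTransform (flip c) ψ') :=
          dualValue_mono hp.1 hq.1 (fun _ => le_rfl) hφ_le

theorem continuous_dualValue (p : X → ℝ) (q : Y → ℝ) :
    Continuous fun w : (X → ℝ) × (Y → ℝ) => dualValue p q w.1 w.2 := by
  unfold dualValue; fun_prop

theorem exists_forall_dualValue_le [Nonempty X] [Nonempty Y] (hp : p ∈ stdSimplex ℝ X)
    (hq : q ∈ stdSimplex ℝ Y) (c : X → Y → ℝ) :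
    ∃ ψ φ, (∀ x y, ψ x + φ y ≤ c x y) ∧ ∀ ψ' φ', (∀ x y, ψ' x + φ' y ≤ c x y) →
      dualValue p q ψ' φ' ≤ dualValue p q ψ φ := by
  obtain ⟨M, hM⟩ : ∃ M, ∀ x y, |c x y| ≤ M := by
    obtain ⟨M, hM⟩ := (Set.finite_range fun z : X × Y => |c z.1 z.2|).bddAbove
    exact ⟨M, fun x y => hM ⟨(x, y), rfl⟩⟩
  have hM0 : 0 ≤ 3 * M := by
    linarith [(abs_nonneg _).trans (hM (Classical.arbitrary X) (Classical.arbitrary Y))]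
  set F := {w : (X → ℝ) × (Y → ℝ) | ∀ x y, w.1 x + w.2 y ≤ c x y} ∩ Metric.closedBall 0 (3 * M)
  have hF : IsCompact F := by
    refine (isCompact_closedBall _ _).inter_left ?_
    simp only [Set.ofPred_forall]
    exact isClosed_iInter fun x => isClosed_iInter fun y => isClosed_le (by fun_prop) (by fun_prop)
  have hbounded : ∀ ψ φ, (∀ x y, ψ x + φ y ≤ c x y) →
      ∃ w ∈ F, dualValue p q ψ φ ≤ dualValue p q w.1 w.2 := by
    intro ψ φ h
    obtain ⟨ψ', φ', h', hψ', hφ', hle⟩ := exists_bounded_dualValue_ge hp hq hM h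
    refine ⟨(ψ', φ'), ⟨h', ?_⟩, hle⟩
    rw [mem_closedBall_zero_iff, norm_prod_le_iff, pi_norm_le_iff_of_nonneg hM0,
      pi_norm_le_iff_of_nonneg hM0]
    exact ⟨fun x => (hψ' x).trans (by linarith), hφ'⟩
  obtain ⟨w₀, hw₀, -⟩ := hbounded (cTransform c 0) 0 fun x y => by
    simpa using cTransform_add_le (c := c) 0 x y
  obtain ⟨w, hw, hwmax⟩ := hF.exists_isMaxOn ⟨w₀, hw₀⟩ (continuous_dualValue p q).continuousOn
  refine ⟨w.1, w.2, hw.1, fun ψ φ h => ?_⟩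
  obtain ⟨w', hw', hle⟩ := hbounded ψ φ h
  exact hle.trans (hwmax hw')

end Duality

/-- **Kantorovich duality on finite spaces.**
For probability distributions `p ∈ Δ^X`, `q ∈ Δ^Y` on nonempty finite sets and any cost
`c : X×Y → ℝ`, the minimum transport cost over couplings of `(p,q)` equals the maximum of
`Σ_x p(x)ψ(x) + Σ_y q(y)φ(y)` over potentials with `ψ(x) + φ(y) ≤ c(x,y)`. -/
theorem kantorovich_duality_finite
    (X Y : Type*) [Fintype X] [Fintype Y] [Nonempty X] [Nonempty Y]
    (p : X → ℝ) (q : Y → ℝ)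
    (hp : p ∈ stdSimplex ℝ X) (hq : q ∈ stdSimplex ℝ Y)
    (c : X → Y → ℝ) :
    ∃ m : ℝ,
      IsLeast {t : ℝ | ∃ γ : X → Y → ℝ,
          (∀ x y, 0 ≤ γ x y) ∧
          (∀ x, ∑ y, γ x y = p x) ∧
          (∀ y, ∑ x, γ x y = q y) ∧
          t = ∑ x, ∑ y, c x y * γ x y} m ∧
      IsGreatest {t : ℝ | ∃ (ψ : X → ℝ) (φ : Y → ℝ),
          (∀ x y, ψ x + φ y ≤ c x y) ∧
          t = (∑ x, p x * ψ x) + ∑ y, q y * φ y} m := by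
  obtain ⟨γ, hγ, hγmin⟩ := (isCompact_setOf_isCoupling p q).exists_isMinOn
    ⟨_, isCoupling_mul hp hq⟩ (continuous_transportCost c).continuousOn
  obtain ⟨ψ, φ, h, hmax⟩ := exists_forall_dualValue_le hp hq c
  have hstrong : transportCost c γ ≤ dualValue p q ψ φ := by
    refine le_of_forall_pos_lt_add fun ε hε => ?_
    obtain ⟨ψ', φ', h', hlt⟩ := exists_lt_dualValue (c := c) (s := transportCost c γ - ε) hp hq
      fun γ' hγ' => by linarith [isMinOn_iff.1 hγmin γ' hγ']
    linarith [hmax ψ' φ' h']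
  refine ⟨transportCost c γ, ⟨⟨γ, hγ.1, hγ.2.1, hγ.2.2, rfl⟩, ?_⟩,
    ⟨ψ, φ, h, (le_antisymm (dualValue_le_transportCost hγ h) hstrong).symm⟩, ?_⟩
  · rintro _ ⟨γ', h0, h1, h2, rfl⟩
    exact hγmin ⟨h0, h1, h2⟩
  · rintro _ ⟨ψ', φ', h', rfl⟩
    exact dualValue_le_transportCost hγ h'
end

section
/- Let S and A be nonempty finite sets, γ ∈ [0,1), R : S×A → ℝ with |R(s,a)| ≤ R_max for all (s,a), and let π : S → Δ^{|A|} be a stationary policy. Let p and p' be two transition kernels assigning to each (s,a) distributions p_{sa}, p'_{sa} ∈ Δ^{|S|}. Let V and V' be the (unique) functions in ℝ^S satisfying the policy Bellman equations V(s) = Σ_a π(a|s)·( R(s,a) + γ·Σ_{s'} p_{sa}(s')·V(s') ) and V'(s) = Σ_a π(a|s)·( R(s,a) + γ·Σ_{s'} p'_{sa}(s')·V'(s') ). Then ‖V − V'‖_∞ ≤ ( γ·R_max / (1−γ)² ) · max_{(s,a)} ‖p_{sa} − p'_{sa}‖₁. -/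
/-- **Simulation lemma.**  For a fixed stationary policy `π`, rewards bounded by `R_max`
and discount `γ ∈ [0,1)`, the fixed-point value functions `V`, `V'` of the policy Bellman
equations under two transition kernels `p`, `p'` satisfy
`‖V − V'‖_∞ ≤ (γ R_max / (1−γ)²) · max_{(s,a)} ‖p_{sa} − p'_{sa}‖₁`. -/
theorem simulation_lemma
    (S A : Type*) [Fintype S] [Fintype A] [Nonempty S] [Nonempty A]
    (γ : ℝ) (hγ0 : 0 ≤ γ) (hγ1 : γ < 1)
    (R : S → A → ℝ) (Rmax : ℝ) (hR : ∀ s a, |R s a| ≤ Rmax)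
    (π : S → A → ℝ) (hπ : ∀ s, π s ∈ stdSimplex ℝ A)
    (p p' : S → A → S → ℝ)
    (hp : ∀ s a, p s a ∈ stdSimplex ℝ S) (hp' : ∀ s a, p' s a ∈ stdSimplex ℝ S)
    (V V' : S → ℝ)
    (hV : ∀ s, V s = ∑ a, π s a * (R s a + γ * ∑ s', p s a s' * V s'))
    (hV' : ∀ s, V' s = ∑ a, π s a * (R s a + γ * ∑ s', p' s a s' * V' s')) :
    ∀ s, |V s - V' s| ≤
      (γ * Rmax / (1 - γ) ^ 2) *
        Finset.univ.sup' Finset.univ_nonempty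
          (fun sa : S × A => ∑ s', |p sa.1 sa.2 s' - p' sa.1 sa.2 s'|) := by
  set ε := Finset.univ.sup' Finset.univ_nonempty
      (fun sa : S × A => ∑ s', |p sa.1 sa.2 s' - p' sa.1 sa.2 s'|) with hεdef
  have h1γ : (0:ℝ) < 1 - γ := by linarith
  have hεle : ∀ s a, (∑ s', |p s a s' - p' s a s'|) ≤ ε := fun s a =>
    Finset.le_sup' (f := fun sa : S × A => ∑ s', |p sa.1 sa.2 s' - p' sa.1 sa.2 s'|)
      (Finset.mem_univ (s, a))
  have hε0 : 0 ≤ ε := by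
    obtain ⟨sa, _, h⟩ := Finset.exists_mem_eq_sup' Finset.univ_nonempty
      (fun sa : S × A => ∑ s', |p sa.1 sa.2 s' - p' sa.1 sa.2 s'|)
    rw [hεdef, h]
    exact Finset.sum_nonneg fun _ _ => abs_nonneg _
  set M := Finset.univ.sup' Finset.univ_nonempty (fun s => |V' s|) with hMdef
  have hMs : ∀ s, |V' s| ≤ M := fun s =>
    Finset.le_sup' (f := fun s => |V' s|) (Finset.mem_univ s)
  have hM0 : 0 ≤ M := le_trans (abs_nonneg _) (hMs (Classical.arbitrary S))
  have hRmax0 : 0 ≤ Rmax :=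
    le_trans (abs_nonneg _) (hR (Classical.arbitrary S) (Classical.arbitrary A))
  -- bound on M
  have hMbound : M * (1 - γ) ≤ Rmax := by
    obtain ⟨s, _, hs⟩ := Finset.exists_mem_eq_sup' Finset.univ_nonempty (fun s => |V' s|)
    have hb : |V' s| ≤ Rmax + γ * M := by
      rw [hV' s]
      calc |∑ a, π s a * (R s a + γ * ∑ s', p' s a s' * V' s')|
          ≤ ∑ a, |π s a * (R s a + γ * ∑ s', p' s a s' * V' s')| :=
            Finset.abs_sum_le_sum_abs _ _
        _ ≤ ∑ a, π s a * (Rmax + γ * M) := by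
            apply Finset.sum_le_sum
            intro a _
            have hπa : 0 ≤ π s a := (hπ s).1 a
            rw [abs_mul, abs_of_nonneg hπa]
            apply mul_le_mul_of_nonneg_left _ hπa
            calc |R s a + γ * ∑ s', p' s a s' * V' s'|
                ≤ |R s a| + |γ * ∑ s', p' s a s' * V' s'| := abs_add_le _ _
              _ ≤ Rmax + γ * M := by
                  have h2 : |γ * ∑ s', p' s a s' * V' s'| ≤ γ * M := by
                    rw [abs_mul, abs_of_nonneg hγ0]
                    apply mul_le_mul_of_nonneg_left _ hγ0
                    calc |∑ s', p' s a s' * V' s'| ≤ ∑ s', |p' s a s' * V' s'| :=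
                          Finset.abs_sum_le_sum_abs _ _
                      _ ≤ ∑ s', p' s a s' * M := by
                          apply Finset.sum_le_sum
                          intro s' _
                          have hps : 0 ≤ p' s a s' := (hp' s a).1 s'
                          rw [abs_mul, abs_of_nonneg hps]
                          exact mul_le_mul_of_nonneg_left (hMs s') hps
                      _ = M := by rw [← Finset.sum_mul, (hp' s a).2, one_mul]
                  linarith [hR s a]
        _ = Rmax + γ * M := by rw [← Finset.sum_mul, (hπ s).2, one_mul]
    rw [← hs] at hb
    nlinarith
  -- D, the sup of |V - V'|
  set D := Finset.univ.sup' Finset.univ_nonempty (fun s => |V s - V' s|) with hDdef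
  have hDs : ∀ s, |V s - V' s| ≤ D := fun s =>
    Finset.le_sup' (f := fun s => |V s - V' s|) (Finset.mem_univ s)
  have hD0 : 0 ≤ D := le_trans (abs_nonneg _) (hDs (Classical.arbitrary S))
  -- pointwise contraction bound
  have hpt : ∀ s, |V s - V' s| ≤ γ * (ε * M + D) := by
    intro s
    have hdiff : V s - V' s = ∑ a, π s a *
        (γ * ((∑ s', p s a s' * V s') - ∑ s', p' s a s' * V' s')) := by
      rw [hV s, hV' s, ← Finset.sum_sub_distrib]
      apply Finset.sum_congr rfl
      intro a _
      ring
    rw [hdiff]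
    calc |∑ a, π s a * (γ * ((∑ s', p s a s' * V s') - ∑ s', p' s a s' * V' s'))|
        ≤ ∑ a, |π s a * (γ * ((∑ s', p s a s' * V s') - ∑ s', p' s a s' * V' s'))| :=
          Finset.abs_sum_le_sum_abs _ _
      _ ≤ ∑ a, π s a * (γ * (ε * M + D)) := by
          apply Finset.sum_le_sum
          intro a _
          have hπa : 0 ≤ π s a := (hπ s).1 a
          rw [abs_mul, abs_of_nonneg hπa]
          apply mul_le_mul_of_nonneg_left _ hπa
          rw [abs_mul, abs_of_nonneg hγ0]
          apply mul_le_mul_of_nonneg_left _ hγ0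
          have hsplit : (∑ s', p s a s' * V s') - ∑ s', p' s a s' * V' s' =
              (∑ s', (p s a s' - p' s a s') * V' s') + ∑ s', p s a s' * (V s' - V' s') := by
            rw [← Finset.sum_add_distrib, ← Finset.sum_sub_distrib]
            apply Finset.sum_congr rfl
            intro s' _
            ring
          rw [hsplit]
          have h1 : |∑ s', (p s a s' - p' s a s') * V' s'| ≤ ε * M := by
            calc |∑ s', (p s a s' - p' s a s') * V' s'|
                ≤ ∑ s', |(p s a s' - p' s a s') * V' s'| := Finset.abs_sum_le_sum_abs _ _
              _ ≤ ∑ s', |p s a s' - p' s a s'| * M := by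
                  apply Finset.sum_le_sum
                  intro s' _
                  rw [abs_mul]
                  exact mul_le_mul_of_nonneg_left (hMs s') (abs_nonneg _)
              _ = (∑ s', |p s a s' - p' s a s'|) * M := (Finset.sum_mul _ _ _).symm
              _ ≤ ε * M := mul_le_mul_of_nonneg_right (hεle s a) hM0
          have h2 : |∑ s', p s a s' * (V s' - V' s')| ≤ D := by
            calc |∑ s', p s a s' * (V s' - V' s')|
                ≤ ∑ s', |p s a s' * (V s' - V' s')| := Finset.abs_sum_le_sum_abs _ _
              _ ≤ ∑ s', p s a s' * D := by
                  apply Finset.sum_le_sum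
                  intro s' _
                  have hps : 0 ≤ p s a s' := (hp s a).1 s'
                  rw [abs_mul, abs_of_nonneg hps]
                  exact mul_le_mul_of_nonneg_left (hDs s') hps
              _ = D := by rw [← Finset.sum_mul, (hp s a).2, one_mul]
          calc |(∑ s', (p s a s' - p' s a s') * V' s') + ∑ s', p s a s' * (V s' - V' s')|
              ≤ |∑ s', (p s a s' - p' s a s') * V' s'| +
                |∑ s', p s a s' * (V s' - V' s')| := abs_add_le _ _
            _ ≤ ε * M + D := add_le_add h1 h2
      _ = γ * (ε * M + D) := by rw [← Finset.sum_mul, (hπ s).2, one_mul]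
  -- D bound
  have hDbound : D ≤ γ * ε * M / (1 - γ) := by
    obtain ⟨s, _, hs⟩ := Finset.exists_mem_eq_sup' Finset.univ_nonempty
      (fun s => |V s - V' s|)
    have h := hpt s
    rw [← hs] at h
    rw [le_div_iff₀ h1γ]
    nlinarith
  -- conclusion
  intro s
  refine le_trans (hDs s) (le_trans hDbound ?_)
  have hrw : γ * Rmax / (1 - γ) ^ 2 * ε = γ * Rmax * ε / (1 - γ) ^ 2 := by ring
  rw [hrw, div_le_div_iff₀ h1γ (by positivity : (0:ℝ) < (1 - γ) ^ 2)]
  nlinarith [mul_le_mul_of_nonneg_left hMbound (mul_nonneg (mul_nonneg hγ0 hε0) h1γ.le)]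
end

section
/- Let Ξ₁ and Ξ₂ be nonempty finite sets, let 𝒫₁ be a nonempty subset of Δ^{Ξ₁}, and for each ξ₁ ∈ Ξ₁ let 𝒫₂(ξ₁) be a nonempty subset of Δ^{Ξ₂}. Let 𝒫 be the rectangular set of joint distributions μ on Ξ₁×Ξ₂ of the form μ(ξ₁,ξ₂) = p(ξ₁)·q_{ξ₁}(ξ₂) with p ∈ 𝒫₁ and q_{ξ₁} ∈ 𝒫₂(ξ₁) for every ξ₁. Then for every f : Ξ₁×Ξ₂ → ℝ, sup_{μ∈𝒫} Σ_{ξ₁,ξ₂} μ(ξ₁,ξ₂)·f(ξ₁,ξ₂) = sup_{p∈𝒫₁} Σ_{ξ₁} p(ξ₁) · ( sup_{q∈𝒫₂(ξ₁)} Σ_{ξ₂} q(ξ₂)·f(ξ₁,ξ₂) ). -/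
/-!
The weights `p ≥ 0` make `x ↦ ∑ ξ₁, p ξ₁ * x ξ₁` monotone, so every rectangular value
`∑ p(ξ₁) E_{q_{ξ₁}} f(ξ₁, ·)` is at most the nested value; conversely the vector of inner
suprema lies in the closure of the vectors of attainable inner expectations (the choices of
`q_{ξ₁}` are independent, so these vectors form a product set), and the weighted sum is
continuous. Hence both sides have the same upper bounds, and so the same supremum.
-/

open Set

theorem csSup_eq_csSup_of_upperBounds_eq {α : Type*} [ConditionallyCompleteLinearOrder α]
    [NoBotOrder α] {s t : Set α} (h : upperBounds s = upperBounds t) : sSup s = sSup t := by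
  have of_isLUB : ∀ {s t : Set α}, upperBounds s = upperBounds t → s.Nonempty → BddAbove s →
      sSup s = sSup t := fun h hne hbdd => by
    have hlub : IsLUB _ (sSup _) := (isLUB_congr h).1 (isLUB_csSup hne hbdd)
    exact (hlub.csSup_eq hlub.nonempty).symm
  have hbdd : BddAbove s ↔ BddAbove t := by rw [BddAbove, BddAbove, h]
  by_cases hs : BddAbove s
  · rcases s.eq_empty_or_nonempty with rfl | hs_ne
    · rcases t.eq_empty_or_nonempty with rfl | ht_ne
      · rfl
      · exact (of_isLUB h.symm ht_ne (hbdd.1 hs)).symm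
    · exact of_isLUB h hs_ne hs
  · rw [csSup_of_not_bddAbove hs, csSup_of_not_bddAbove (mt hbdd.2 hs)]

theorem sum_mul_csSup_image_le_iff {ι β : Type*} [Fintype ι] {w : ι → ℝ} (hw : ∀ i, 0 ≤ w i)
    {v : ι → β → ℝ} {Q : ι → Set β} (hne : ∀ i, (Q i).Nonempty)
    (hbdd : ∀ i, BddAbove (v i '' Q i)) {b : ℝ} :
    ∑ i, w i * sSup (v i '' Q i) ≤ b ↔ ∀ q ∈ univ.pi Q, ∑ i, w i * v i (q i) ≤ b := by
  refine ⟨fun hb q hq => le_trans ?_ hb, fun hb => ?_⟩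
  · exact Finset.sum_le_sum fun i _ => mul_le_mul_of_nonneg_left
      (le_csSup (hbdd i) (mem_image_of_mem _ (hq i (mem_univ i)))) (hw i)
  · have hsup : (fun i => sSup (v i '' Q i)) ∈ closure (univ.pi fun i => v i '' Q i) := by
      rw [closure_pi_set]
      exact fun i _ => csSup_mem_closure ((hne i).image _) (hbdd i)
    have hclosed : IsClosed {x : ι → ℝ | ∑ i, w i * x i ≤ b} :=
      isClosed_le (by fun_prop) continuous_const
    refine closure_minimal (fun x hx => ?_) hclosed hsup
    choose q hq hqx using fun i => hx i (mem_univ i)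
    simpa only [mem_ofPred_eq, ← hqx] using hb q fun i _ => hq i

theorem rectangular_nested_sup_general
    (Ξ₁ Ξ₂ : Type*) [Fintype Ξ₁] [Fintype Ξ₂]
    (P₁ : Set (Ξ₁ → ℝ)) (hP₁ : P₁ ⊆ stdSimplex ℝ Ξ₁)
    (P₂ : Ξ₁ → Set (Ξ₂ → ℝ)) (hP₂ne : ∀ ξ₁, (P₂ ξ₁).Nonempty)
    (hP₂ : ∀ ξ₁, P₂ ξ₁ ⊆ stdSimplex ℝ Ξ₂)
    (f : Ξ₁ → Ξ₂ → ℝ) :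
    sSup {x : ℝ | ∃ p ∈ P₁, ∃ q : Ξ₁ → (Ξ₂ → ℝ), (∀ ξ₁, q ξ₁ ∈ P₂ ξ₁) ∧
        x = ∑ ξ₁, ∑ ξ₂, p ξ₁ * q ξ₁ ξ₂ * f ξ₁ ξ₂}
      = sSup {x : ℝ | ∃ p ∈ P₁,
          x = ∑ ξ₁, p ξ₁ *
                sSup {y : ℝ | ∃ q ∈ P₂ ξ₁, y = ∑ ξ₂, q ξ₂ * f ξ₁ ξ₂}} := by
  have hinner : ∀ ξ₁, {y : ℝ | ∃ q ∈ P₂ ξ₁, y = ∑ ξ₂, q ξ₂ * f ξ₁ ξ₂} =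
      (fun q => ∑ ξ₂, q ξ₂ * f ξ₁ ξ₂) '' P₂ ξ₁ := fun ξ₁ => by
    ext; simp only [mem_ofPred_eq, mem_image, eq_comm]
  have hbdd : ∀ ξ₁, BddAbove ((fun q => ∑ ξ₂, q ξ₂ * f ξ₁ ξ₂) '' P₂ ξ₁) := fun ξ₁ =>
    ((isCompact_stdSimplex ℝ Ξ₂).bddAbove_image (by fun_prop)).mono (image_mono (hP₂ ξ₁))
  have hnested : ∀ p ∈ P₁, ∀ b,
      ∑ ξ₁, p ξ₁ * sSup {y : ℝ | ∃ q ∈ P₂ ξ₁, y = ∑ ξ₂, q ξ₂ * f ξ₁ ξ₂} ≤ b ↔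
      ∀ q : Ξ₁ → Ξ₂ → ℝ, (∀ ξ₁, q ξ₁ ∈ P₂ ξ₁) → ∑ ξ₁, ∑ ξ₂, p ξ₁ * q ξ₁ ξ₂ * f ξ₁ ξ₂ ≤ b := by
    intro p hp b
    simp only [hinner, sum_mul_csSup_image_le_iff (hP₁ hp).1 hP₂ne hbdd, mem_univ_pi,
      Finset.mul_sum, mul_assoc]
  refine csSup_eq_csSup_of_upperBounds_eq (ext fun b => ?_)
  simp only [mem_upperBounds, mem_ofPred_eq, forall_exists_index, and_imp]
  constructor
  · rintro h _ p hp rfl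
    exact (hnested p hp b).2 fun q hq => h _ p hp q hq rfl
  · rintro h _ p hp q hq rfl
    exact (hnested p hp b).1 (h _ p hp rfl) q hq

/-- **Rectangular ambiguity sets decompose the worst case into nested worst cases.**
If `𝒫` consists of all joint distributions `μ(ξ₁,ξ₂) = p(ξ₁)·q_{ξ₁}(ξ₂)` with `p ∈ 𝒫₁`
and conditionals `q_{ξ₁} ∈ 𝒫₂(ξ₁)` chosen independently for each `ξ₁`, then for every
`f : Ξ₁×Ξ₂ → ℝ`,
`sup_{μ∈𝒫} E_μ[f] = sup_{p∈𝒫₁} Σ_{ξ₁} p(ξ₁) · sup_{q∈𝒫₂(ξ₁)} Σ_{ξ₂} q(ξ₂) f(ξ₁,ξ₂)`. -/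
theorem rectangular_nested_sup
    (Ξ₁ Ξ₂ : Type*) [Fintype Ξ₁] [Fintype Ξ₂] [Nonempty Ξ₁] [Nonempty Ξ₂]
    (P₁ : Set (Ξ₁ → ℝ)) (hP₁ne : P₁.Nonempty) (hP₁ : P₁ ⊆ stdSimplex ℝ Ξ₁)
    (P₂ : Ξ₁ → Set (Ξ₂ → ℝ)) (hP₂ne : ∀ ξ₁, (P₂ ξ₁).Nonempty)
    (hP₂ : ∀ ξ₁, P₂ ξ₁ ⊆ stdSimplex ℝ Ξ₂)
    (f : Ξ₁ → Ξ₂ → ℝ) :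
    sSup {x : ℝ | ∃ p ∈ P₁, ∃ q : Ξ₁ → (Ξ₂ → ℝ), (∀ ξ₁, q ξ₁ ∈ P₂ ξ₁) ∧
        x = ∑ ξ₁, ∑ ξ₂, p ξ₁ * q ξ₁ ξ₂ * f ξ₁ ξ₂}
      = sSup {x : ℝ | ∃ p ∈ P₁,
          x = ∑ ξ₁, p ξ₁ *
                sSup {y : ℝ | ∃ q ∈ P₂ ξ₁, y = ∑ ξ₂, q ξ₂ * f ξ₁ ξ₂}} :=
  rectangular_nested_sup_general Ξ₁ Ξ₂ P₁ hP₁ P₂ hP₂ne hP₂ f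
end

section
/- Let Ξ₁ and Ξ₂ be nonempty finite sets and let 𝒫 be a nonempty set of joint probability distributions on Ξ₁×Ξ₂. For a joint distribution μ write μ₁(ξ₁) = Σ_{ξ₂} μ(ξ₁,ξ₂) for its first marginal and, when μ₁(ξ₁) > 0, write μ(ξ₂|ξ₁) = μ(ξ₁,ξ₂)/μ₁(ξ₁). Then for every f : Ξ₁×Ξ₂ → ℝ, sup_{μ∈𝒫} Σ_{ξ₁,ξ₂} μ(ξ₁,ξ₂)·f(ξ₁,ξ₂) ≤ sup_{μ∈𝒫} Σ_{ξ₁ : μ₁(ξ₁)>0} μ₁(ξ₁) · ( sup_{ν∈𝒫 : ν₁(ξ₁)>0} Σ_{ξ₂} ν(ξ₂|ξ₁)·f(ξ₁,ξ₂) ), i.e. the nested (stage-wise) worst-case expectation always upper-bounds the static worst-case expectation, for an arbitrary (possibly non-rectangular) ambiguity set. -/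
open Classical in
/-- **The nested worst-case expectation dominates the static one.**
For an arbitrary (possibly non-rectangular) nonempty set `𝒫` of joint distributions on
`Ξ₁ × Ξ₂` and any `f`, the static worst-case expectation is at most the nested one:
`sup_{μ∈𝒫} E_μ[f] ≤ sup_{μ∈𝒫} Σ_{ξ₁ : μ₁(ξ₁)>0} μ₁(ξ₁) ·
   sup_{ν∈𝒫, ν₁(ξ₁)>0} Σ_{ξ₂} ν(ξ₂|ξ₁) f(ξ₁,ξ₂)`. -/
theorem static_le_nested_sup
    (Ξ₁ Ξ₂ : Type*) [Fintype Ξ₁] [Fintype Ξ₂] [Nonempty Ξ₁] [Nonempty Ξ₂]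
    (P : Set (Ξ₁ × Ξ₂ → ℝ)) (hPne : P.Nonempty)
    (hP : ∀ μ ∈ P, (∀ x, 0 ≤ μ x) ∧ (∑ x, μ x) = 1)
    (f : Ξ₁ → Ξ₂ → ℝ) :
    let marg : (Ξ₁ × Ξ₂ → ℝ) → Ξ₁ → ℝ := fun μ ξ₁ => ∑ ξ₂, μ (ξ₁, ξ₂)
    sSup {x : ℝ | ∃ μ ∈ P, x = ∑ ξ₁, ∑ ξ₂, μ (ξ₁, ξ₂) * f ξ₁ ξ₂}
      ≤ sSup {x : ℝ | ∃ μ ∈ P,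
          x = ∑ ξ₁ ∈ Finset.univ.filter (fun ξ₁ => 0 < marg μ ξ₁),
                marg μ ξ₁ *
                  sSup {y : ℝ | ∃ ν ∈ P, 0 < marg ν ξ₁ ∧
                    y = ∑ ξ₂, (ν (ξ₁, ξ₂) / marg ν ξ₁) * f ξ₁ ξ₂}} := by
  intro marg
  set C : ℝ := ∑ ξ₁, ∑ ξ₂, |f ξ₁ ξ₂| with hC
  have hCnn : 0 ≤ C :=
    Finset.sum_nonneg fun _ _ => Finset.sum_nonneg fun _ _ => abs_nonneg _
  -- inner sets are bounded above by C
  have hinner_bdd : ∀ ξ₁ : Ξ₁, ∀ y ∈ {y : ℝ | ∃ ν ∈ P, 0 < marg ν ξ₁ ∧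
      y = ∑ ξ₂, (ν (ξ₁, ξ₂) / marg ν ξ₁) * f ξ₁ ξ₂}, y ≤ C := by
    rintro ξ₁ y ⟨ν, hν, hm, rfl⟩
    obtain ⟨hν0, -⟩ := hP ν hν
    have h1 : ∀ ξ₂ : Ξ₂, (ν (ξ₁, ξ₂) / marg ν ξ₁) * f ξ₁ ξ₂ ≤ |f ξ₁ ξ₂| := by
      intro ξ₂
      have h0 : 0 ≤ ν (ξ₁, ξ₂) / marg ν ξ₁ := div_nonneg (hν0 _) hm.le
      have hle1 : ν (ξ₁, ξ₂) / marg ν ξ₁ ≤ 1 := by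
        rw [div_le_one hm]
        exact Finset.single_le_sum (fun i _ => hν0 _) (Finset.mem_univ ξ₂)
      calc (ν (ξ₁, ξ₂) / marg ν ξ₁) * f ξ₁ ξ₂
          ≤ (ν (ξ₁, ξ₂) / marg ν ξ₁) * |f ξ₁ ξ₂| :=
            mul_le_mul_of_nonneg_left (le_abs_self _) h0
        _ ≤ 1 * |f ξ₁ ξ₂| := mul_le_mul_of_nonneg_right hle1 (abs_nonneg _)
        _ = |f ξ₁ ξ₂| := one_mul _
    calc ∑ ξ₂, (ν (ξ₁, ξ₂) / marg ν ξ₁) * f ξ₁ ξ₂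
        ≤ ∑ ξ₂, |f ξ₁ ξ₂| := Finset.sum_le_sum fun ξ₂ _ => h1 ξ₂
      _ ≤ C := Finset.single_le_sum (f := fun ξ₁ => ∑ ξ₂, |f ξ₁ ξ₂|)
          (fun i _ => Finset.sum_nonneg fun _ _ => abs_nonneg _) (Finset.mem_univ ξ₁)
  -- nested value of each μ ∈ P is bounded above by C
  have hnest_le : ∀ μ ∈ P,
      (∑ ξ₁ ∈ Finset.univ.filter (fun ξ₁ => 0 < marg μ ξ₁),
        marg μ ξ₁ *
          sSup {y : ℝ | ∃ ν ∈ P, 0 < marg ν ξ₁ ∧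
            y = ∑ ξ₂, (ν (ξ₁, ξ₂) / marg ν ξ₁) * f ξ₁ ξ₂}) ≤ C := by
    intro μ hμ
    obtain ⟨hμ0, hμ1⟩ := hP μ hμ
    have hsum : ∑ ξ₁ ∈ Finset.univ.filter (fun ξ₁ => 0 < marg μ ξ₁), marg μ ξ₁ ≤ 1 := by
      calc ∑ ξ₁ ∈ Finset.univ.filter (fun ξ₁ => 0 < marg μ ξ₁), marg μ ξ₁
          ≤ ∑ ξ₁, marg μ ξ₁ := Finset.sum_le_sum_of_subset_of_nonneg
            (Finset.filter_subset _ _)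
            (fun i _ _ => Finset.sum_nonneg fun _ _ => hμ0 _)
        _ = ∑ x, μ x := by rw [← Fintype.sum_prod_type]
        _ = 1 := hμ1
    calc ∑ ξ₁ ∈ Finset.univ.filter (fun ξ₁ => 0 < marg μ ξ₁),
          marg μ ξ₁ * sSup {y : ℝ | ∃ ν ∈ P, 0 < marg ν ξ₁ ∧
            y = ∑ ξ₂, (ν (ξ₁, ξ₂) / marg ν ξ₁) * f ξ₁ ξ₂}
        ≤ ∑ ξ₁ ∈ Finset.univ.filter (fun ξ₁ => 0 < marg μ ξ₁), marg μ ξ₁ * C := by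
          refine Finset.sum_le_sum fun ξ₁ hξ₁ => ?_
          have hm : 0 < marg μ ξ₁ := (Finset.mem_filter.mp hξ₁).2
          refine mul_le_mul_of_nonneg_left ?_ hm.le
          refine Real.sSup_le (fun y hy => hinner_bdd ξ₁ y hy) hCnn
      _ = (∑ ξ₁ ∈ Finset.univ.filter (fun ξ₁ => 0 < marg μ ξ₁), marg μ ξ₁) * C := by
          rw [Finset.sum_mul]
      _ ≤ 1 * C := mul_le_mul_of_nonneg_right hsum hCnn
      _ = C := one_mul _
  -- RHS set bounded above by C, and nonempty
  have hRbdd : BddAbove {x : ℝ | ∃ μ ∈ P,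
      x = ∑ ξ₁ ∈ Finset.univ.filter (fun ξ₁ => 0 < marg μ ξ₁),
            marg μ ξ₁ *
              sSup {y : ℝ | ∃ ν ∈ P, 0 < marg ν ξ₁ ∧
                y = ∑ ξ₂, (ν (ξ₁, ξ₂) / marg ν ξ₁) * f ξ₁ ξ₂}} := by
    refine ⟨C, ?_⟩
    rintro x ⟨μ, hμ, rfl⟩
    exact hnest_le μ hμ
  -- main bound
  obtain ⟨μ₀, hμ₀⟩ := hPne
  refine csSup_le ⟨_, μ₀, hμ₀, rfl⟩ ?_
  · rintro x ⟨μ, hμ, rfl⟩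
    obtain ⟨hμ0, hμ1⟩ := hP μ hμ
    have key : (∑ ξ₁, ∑ ξ₂, μ (ξ₁, ξ₂) * f ξ₁ ξ₂)
        ≤ ∑ ξ₁ ∈ Finset.univ.filter (fun ξ₁ => 0 < marg μ ξ₁),
            marg μ ξ₁ *
              sSup {y : ℝ | ∃ ν ∈ P, 0 < marg ν ξ₁ ∧
                y = ∑ ξ₂, (ν (ξ₁, ξ₂) / marg ν ξ₁) * f ξ₁ ξ₂} := by
      have hzero : ∀ ξ₁ : Ξ₁, ¬ (0 < marg μ ξ₁) → (∑ ξ₂, μ (ξ₁, ξ₂) * f ξ₁ ξ₂) = 0 := by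
        intro ξ₁ h
        have hm0 : marg μ ξ₁ = 0 :=
          le_antisymm (not_lt.mp h) (Finset.sum_nonneg fun _ _ => hμ0 _)
        have : ∀ ξ₂ : Ξ₂, μ (ξ₁, ξ₂) = 0 := by
          intro ξ₂
          have := (Finset.sum_eq_zero_iff_of_nonneg (fun i _ => hμ0 (ξ₁, i))).mp hm0
          exact this ξ₂ (Finset.mem_univ _)
        simp [this]
      have hrw : (∑ ξ₁, ∑ ξ₂, μ (ξ₁, ξ₂) * f ξ₁ ξ₂)
          = ∑ ξ₁ ∈ Finset.univ.filter (fun ξ₁ => 0 < marg μ ξ₁),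
              ∑ ξ₂, μ (ξ₁, ξ₂) * f ξ₁ ξ₂ := by
        refine (Finset.sum_subset (Finset.filter_subset _ _) ?_).symm
        intro ξ₁ _ hξ₁
        exact hzero ξ₁ (by simpa using hξ₁)
      rw [hrw]
      refine Finset.sum_le_sum fun ξ₁ hξ₁ => ?_
      have hm : 0 < marg μ ξ₁ := (Finset.mem_filter.mp hξ₁).2
      have hmem : (∑ ξ₂, (μ (ξ₁, ξ₂) / marg μ ξ₁) * f ξ₁ ξ₂) ∈
          {y : ℝ | ∃ ν ∈ P, 0 < marg ν ξ₁ ∧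
            y = ∑ ξ₂, (ν (ξ₁, ξ₂) / marg ν ξ₁) * f ξ₁ ξ₂} := ⟨μ, hμ, hm, rfl⟩
      have hle := le_csSup ⟨C, fun y hy => hinner_bdd ξ₁ y hy⟩ hmem
      have heq : (∑ ξ₂, μ (ξ₁, ξ₂) * f ξ₁ ξ₂)
          = marg μ ξ₁ * ∑ ξ₂, (μ (ξ₁, ξ₂) / marg μ ξ₁) * f ξ₁ ξ₂ := by
        rw [Finset.mul_sum]
        refine Finset.sum_congr rfl fun ξ₂ _ => ?_
        field_simp
      rw [heq]
      exact mul_le_mul_of_nonneg_left hle hm.le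
    refine le_trans key (le_csSup hRbdd ?_)
    exact ⟨μ, hμ, rfl⟩
end

section
/- Let ‖·‖ be a norm on ℝ^k with dual norm ‖·‖_*, let p̂ ∈ ℝ^k with Σ_i p̂_i = 1, let v ∈ ℝ^k, and let θ ≥ 0. Then inf over p ∈ ℝ^k with Σ_i p_i = 1 and ‖p − p̂‖ ≤ θ of Σ_i p_i v_i equals Σ_i p̂_i v_i − θ · inf_{c ∈ ℝ} ‖v − c·𝟙‖_*, where 𝟙 ∈ ℝ^k is the all-ones vector. In particular, the infimum of the linear objective over the norm ball intersected with the probability simplex Δ^k around p̂ ∈ Δ^k is bounded below by Σ_i p̂_i v_i − θ·‖v‖_*. -/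
/-!
Writing `q = p̂ - θ • u`, the feasible set is `p̂` minus `θ` times the unit ball of the sum-zero
hyperplane `H`, so the infimum is `⟨p̂, v⟩ - θ S`, where `S` is the dual norm of `u ↦ ⟨u, v⟩`
restricted to `H`. By Hahn–Banach this functional extends to all of `ℝ^k` without increasing its
norm, and since the annihilator of `H` is spanned by `𝟙` its extensions are exactly
`x ↦ ⟨x, v - c𝟙⟩`; hence `S = inf_c ‖v - c𝟙‖_*`. Equivalence of norms in finite dimension keeps
all the suprema finite.
-/

namespace Seminorm

variable {E : Type*} [NormedAddCommGroup E] [NormedSpace ℝ E] [FiniteDimensional ℝ E]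
  (p : Seminorm ℝ E)

protected theorem continuous_of_finiteDimensional : Continuous p :=
  continuousOn_univ.1 (p.convexOn.continuousOn isOpen_univ)

theorem exists_pos_mul_norm_le (hp : ∀ x, p x = 0 → x = 0) :
    ∃ m > 0, ∀ x, m * ‖x‖ ≤ p x := by
  obtain ⟨m, hm, hmin⟩ := (isCompact_sphere (0 : E) 1).exists_forall_le'
    p.continuous_of_finiteDimensional.continuousOn fun x hx =>
      (apply_nonneg p x).lt_of_ne' fun h => by simp [hp x h] at hx
  refine ⟨m, hm, fun x => ?_⟩
  rcases eq_or_ne x 0 with rfl | hx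
  · simp
  have hxn : 0 < ‖x‖ := norm_pos_iff.2 hx
  have := hmin (‖x‖⁻¹ • x) (by simp [norm_smul, hxn.ne'])
  rw [map_smul_eq_mul, norm_inv, norm_norm, inv_mul_eq_div, le_div_iff₀ hxn] at this
  linarith

theorem isCompact_setOf_le_one (hp : ∀ x, p x = 0 → x = 0) : IsCompact {x | p x ≤ 1} := by
  obtain ⟨m, hm, hle⟩ := p.exists_pos_mul_norm_le hp
  refine Metric.isCompact_of_isClosed_isBounded
    (isClosed_le p.continuous_of_finiteDimensional continuous_const)
    ((Metric.isBounded_closedBall (x := 0) (r := 1 / m)).subset fun x hx => ?_)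
  rw [mem_closedBall_zero_iff, le_div_iff₀' hm]
  exact (hle x).trans hx

end Seminorm

variable {ι : Type*} [Fintype ι]

def sumZeroSubmodule (ι : Type*) [Fintype ι] : Submodule ℝ (ι → ℝ) :=
  LinearMap.ker (dotProductBilin ℝ ℝ (1 : ι → ℝ))

@[simp]
theorem mem_sumZeroSubmodule {u : ι → ℝ} : u ∈ sumZeroSubmodule ι ↔ ∑ i, u i = 0 := by
  simp [sumZeroSubmodule, one_dotProduct]

noncomputable section

namespace Seminorm

variable (p : Seminorm ℝ (ι → ℝ))

def dualNorm (y : ι → ℝ) : ℝ :=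
  sSup {t | ∃ x, p x ≤ 1 ∧ t = x ⬝ᵥ y}

def dualNormOn (W : Submodule ℝ (ι → ℝ)) (y : ι → ℝ) : ℝ :=
  sSup {t | ∃ x ∈ W, p x ≤ 1 ∧ t = x ⬝ᵥ y}

@[simp]
theorem dualNormOn_top : p.dualNormOn ⊤ = p.dualNorm := by
  ext y
  simp [dualNormOn, dualNorm]

variable {p} (hp : ∀ x, p x = 0 → x = 0) (W : Submodule ℝ (ι → ℝ))
include hp

theorem bddAbove_dotProduct_unitBall (y : ι → ℝ) :
    BddAbove {t | ∃ x ∈ W, p x ≤ 1 ∧ t = x ⬝ᵥ y} := by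
  refine ((p.isCompact_setOf_le_one hp).bddAbove_image (f := (· ⬝ᵥ y))
    (continuous_id.dotProduct continuous_const).continuousOn).mono ?_
  rintro _ ⟨x, -, hx, rfl⟩
  exact ⟨x, hx, rfl⟩

theorem dualNormOn_nonneg (y : ι → ℝ) : 0 ≤ p.dualNormOn W y :=
  le_csSup (bddAbove_dotProduct_unitBall hp W y) ⟨0, W.zero_mem, by simp, by simp⟩

theorem dotProduct_le_dualNormOn_mul {x : ι → ℝ} (hx : x ∈ W) (y : ι → ℝ) :
    x ⬝ᵥ y ≤ p.dualNormOn W y * p x := by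
  rcases (apply_nonneg p x).eq_or_lt' with h | h
  · simp [hp x h]
  rw [← div_le_iff₀ h, div_eq_inv_mul, ← smul_eq_mul, ← smul_dotProduct]
  refine le_csSup (bddAbove_dotProduct_unitBall hp W y) ⟨(p x)⁻¹ • x, W.smul_mem _ hx, ?_, rfl⟩
  rw [map_smul_eq_mul, norm_inv, Real.norm_of_nonneg h.le, inv_mul_cancel₀ h.ne']

theorem exists_dualNorm_le_dualNormOn (y : ι → ℝ) :
    ∃ w, (∀ x ∈ W, x ⬝ᵥ w = x ⬝ᵥ y) ∧ p.dualNorm w ≤ p.dualNormOn W y := by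
  classical
  set S := p.dualNormOn W y
  have hS : 0 ≤ S := dualNormOn_nonneg hp W y
  obtain ⟨g, hgW, hg⟩ := exists_extension_of_le_sublinear
    ⟨W, (dotProductBilin ℝ ℝ y).domRestrict W⟩ (fun x => S * p x)
    (fun c hc x => by rw [map_smul_eq_mul, Real.norm_of_nonneg hc.le, mul_left_comm])
    (fun x x' => (mul_le_mul_of_nonneg_left (map_add_le_add p x x') hS).trans_eq (mul_add ..))
    (fun x => by simpa [dotProduct_comm] using dotProduct_le_dualNormOn_mul hp W x.2 y)
  set w := (dotProductEquiv ℝ ι).symm g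
  have hgw : ∀ x, x ⬝ᵥ w = g x := fun x => by
    rw [dotProduct_comm, ← dotProductEquiv_apply_apply, LinearEquiv.apply_symm_apply]
  refine ⟨w, fun x hx => ?_, csSup_le ⟨0, 0, by simp, by simp⟩ ?_⟩
  · simpa [hgw, dotProduct_comm] using hgW ⟨x, hx⟩
  · rintro _ ⟨x, hx, rfl⟩
    rw [hgw]
    exact (hg x).trans (mul_le_of_le_one_right hS hx)

end Seminorm

theorem exists_eq_sub_const_of_dotProduct_eq {v w : ι → ℝ}
    (h : ∀ u ∈ sumZeroSubmodule ι, u ⬝ᵥ w = u ⬝ᵥ v) : ∃ c : ℝ, w = fun i => v i - c := by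
  classical
  rcases isEmpty_or_nonempty ι with _ | ⟨⟨j⟩⟩
  · exact ⟨0, Subsingleton.elim _ _⟩
  refine ⟨v j - w j, funext fun i => ?_⟩
  have := h (Pi.single i 1 - Pi.single j 1) (by simp [Finset.sum_sub_distrib])
  simp only [sub_dotProduct, single_one_dotProduct] at this
  linarith

namespace Seminorm

variable {p : Seminorm ℝ (ι → ℝ)} (hp : ∀ x, p x = 0 → x = 0)
include hp

theorem sInf_dualNorm_sub_const (v : ι → ℝ) :
    sInf {s | ∃ c : ℝ, s = p.dualNorm fun i => v i - c} = p.dualNormOn (sumZeroSubmodule ι) v := by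
  have hbdd : BddBelow {s | ∃ c : ℝ, s = p.dualNorm fun i => v i - c} := by
    refine ⟨0, ?_⟩
    rintro _ ⟨c, rfl⟩
    simpa using dualNormOn_nonneg hp ⊤ fun i => v i - c
  refine le_antisymm ?_ (le_csInf ⟨_, 0, rfl⟩ ?_)
  · obtain ⟨w, hwv, hw⟩ := exists_dualNorm_le_dualNormOn hp _ v
    obtain ⟨c, rfl⟩ := exists_eq_sub_const_of_dotProduct_eq hwv
    exact (csInf_le hbdd ⟨c, rfl⟩).trans hw
  · rintro _ ⟨c, rfl⟩
    refine csSup_le ⟨0, 0, zero_mem _, by simp, by simp⟩ ?_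
    rintro _ ⟨u, hu, hpu, rfl⟩
    have hshift : u ⬝ᵥ v = u ⬝ᵥ fun i => v i - c := by
      simp [dotProduct, mul_sub, Finset.sum_sub_distrib, ← Finset.sum_mul,
        mem_sumZeroSubmodule.1 hu]
    rw [hshift, ← dualNormOn_top]
    exact (dotProduct_le_dualNormOn_mul hp ⊤ Submodule.mem_top _).trans
      (mul_le_of_le_one_right (dualNormOn_nonneg hp ⊤ _) hpu)

theorem sInf_dotProduct_closedBall (W : Submodule ℝ (ι → ℝ)) (q₀ v : ι → ℝ) {θ : ℝ}
    (hθ : 0 ≤ θ) :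
    sInf {t | ∃ q, q - q₀ ∈ W ∧ p (q - q₀) ≤ θ ∧ t = q ⬝ᵥ v}
      = q₀ ⬝ᵥ v - θ * p.dualNormOn W v := by
  set B := {t | ∃ x ∈ W, p x ≤ 1 ∧ t = x ⬝ᵥ v}
  have h0B : (0 : ℝ) ∈ B := ⟨0, zero_mem _, by simp, by simp⟩
  have hset : {t | ∃ q, q - q₀ ∈ W ∧ p (q - q₀) ≤ θ ∧ t = q ⬝ᵥ v}
      = (fun s => q₀ ⬝ᵥ v - θ * s) '' B := by
    ext t
    constructor
    · rintro ⟨q, hqW, hqθ, rfl⟩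
      rcases hθ.eq_or_lt with rfl | hθ
      · obtain rfl : q = q₀ := sub_eq_zero.1 (hp _ (hqθ.antisymm (apply_nonneg p _)))
        exact ⟨0, h0B, by simp⟩
      refine ⟨(θ⁻¹ • (q₀ - q)) ⬝ᵥ v, ⟨_, W.smul_mem _ (by simpa using W.neg_mem hqW), ?_, rfl⟩, ?_⟩
      · rw [map_smul_eq_mul, map_sub_rev, norm_inv, Real.norm_of_nonneg hθ.le]
        exact inv_mul_le_one_of_le₀ hqθ hθ.le
      · simp only [smul_dotProduct, sub_dotProduct, smul_eq_mul]
        field_simp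
        ring
    · rintro ⟨_, ⟨x, hx, hpx, rfl⟩, rfl⟩
      refine ⟨q₀ - θ • x, by simpa using W.neg_mem (W.smul_mem θ hx), ?_, ?_⟩
      · rw [sub_sub_cancel_left, map_neg_eq_map, map_smul_eq_mul, Real.norm_of_nonneg hθ]
        exact mul_le_of_le_one_right hθ hpx
      · simp [sub_dotProduct, smul_dotProduct]
  rw [hset, ← Antitone.map_csSup_of_continuousAt (by fun_prop)
    (fun a b hab => sub_le_sub_left (mul_le_mul_of_nonneg_left hab hθ) _) ⟨0, h0B⟩
    (bddAbove_dotProduct_unitBall hp W v)]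
  rfl

theorem dotProduct_sub_mul_dualNorm_le {q q₀ : ι → ℝ} {θ : ℝ} (hq : p (q - q₀) ≤ θ) (v : ι → ℝ) :
    q₀ ⬝ᵥ v - θ * p.dualNorm v ≤ q ⬝ᵥ v := by
  have h := dotProduct_le_dualNormOn_mul hp ⊤ (Submodule.mem_top (x := q₀ - q)) v
  rw [dualNormOn_top, map_sub_rev, sub_dotProduct] at h
  have := mul_le_mul_of_nonneg_left hq (by simpa using dualNormOn_nonneg hp ⊤ v)
  linarith

end Seminorm

end

theorem norm_ball_robust_regularization_general
    (k : ℕ)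
    (N : (Fin k → ℝ) → ℝ)
    (hNzero : ∀ x : Fin k → ℝ, N x = 0 ↔ x = 0)
    (hNsmul : ∀ (a : ℝ) (x : Fin k → ℝ), N (a • x) = |a| * N x)
    (hNadd : ∀ x y : Fin k → ℝ, N (x + y) ≤ N x + N y)
    (phat : Fin k → ℝ) (hphat : (∑ i, phat i) = 1)
    (v : Fin k → ℝ) (θ : ℝ) (hθ : 0 ≤ θ) :
    let Nstar : (Fin k → ℝ) → ℝ := fun y =>
      sSup {t : ℝ | ∃ x : Fin k → ℝ, N x ≤ 1 ∧ t = ∑ i, x i * y i}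
    (sInf {t : ℝ | ∃ p : Fin k → ℝ, (∑ i, p i) = 1 ∧ N (p - phat) ≤ θ ∧
          t = ∑ i, p i * v i}
        = (∑ i, phat i * v i)
            - θ * sInf {s : ℝ | ∃ c : ℝ, s = Nstar (fun i => v i - c)}) ∧
    (phat ∈ stdSimplex ℝ (Fin k) →
      ∀ p ∈ stdSimplex ℝ (Fin k), N (p - phat) ≤ θ →
        (∑ i, phat i * v i) - θ * Nstar v ≤ ∑ i, p i * v i) := by
  intro Nstar
  let p : Seminorm ℝ (Fin k → ℝ) := .of N hNadd (by simpa only [Real.norm_eq_abs] using hNsmul)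
  have hp : ∀ x, p x = 0 → x = 0 := fun x => (hNzero x).1
  refine ⟨?_, fun _ q _ hq => p.dotProduct_sub_mul_dualNorm_le hp hq v⟩
  have hsum : ∀ q, q - phat ∈ sumZeroSubmodule (Fin k) ↔ ∑ i, q i = 1 := fun q => by
    simp [Finset.sum_sub_distrib, hphat, sub_eq_zero]
  have h := p.sInf_dotProduct_closedBall hp (sumZeroSubmodule (Fin k)) phat v hθ
  rw [← p.sInf_dualNorm_sub_const hp] at h
  simp_rw [← hsum]
  exact h

/-- **Ball-constrained robust one-step values are regularized values.**
For any norm `N` on `ℝ^k` with dual norm `N*`, nominal `p̂` with `Σ p̂ = 1`, values `v`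
and radius `θ ≥ 0`,
`inf { ⟨p,v⟩ : Σ p = 1, N(p − p̂) ≤ θ } = ⟨p̂,v⟩ − θ·inf_{c∈ℝ} N*(v − c·𝟙)`.
In particular, on the norm ball intersected with the simplex around `p̂ ∈ Δ^k` the linear
objective is bounded below by `⟨p̂,v⟩ − θ·N*(v)`. -/
theorem norm_ball_robust_regularization
    (k : ℕ) (hk : 0 < k)
    (N : (Fin k → ℝ) → ℝ)
    (hNzero : ∀ x : Fin k → ℝ, N x = 0 ↔ x = 0)
    (hNsmul : ∀ (a : ℝ) (x : Fin k → ℝ), N (a • x) = |a| * N x)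
    (hNadd : ∀ x y : Fin k → ℝ, N (x + y) ≤ N x + N y)
    (phat : Fin k → ℝ) (hphat : (∑ i, phat i) = 1)
    (v : Fin k → ℝ) (θ : ℝ) (hθ : 0 ≤ θ) :
    let Nstar : (Fin k → ℝ) → ℝ := fun y =>
      sSup {t : ℝ | ∃ x : Fin k → ℝ, N x ≤ 1 ∧ t = ∑ i, x i * y i}
    (sInf {t : ℝ | ∃ p : Fin k → ℝ, (∑ i, p i) = 1 ∧ N (p - phat) ≤ θ ∧
          t = ∑ i, p i * v i}
        = (∑ i, phat i * v i)
            - θ * sInf {s : ℝ | ∃ c : ℝ, s = Nstar (fun i => v i - c)}) ∧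
    (phat ∈ stdSimplex ℝ (Fin k) →
      ∀ p ∈ stdSimplex ℝ (Fin k), N (p - phat) ≤ θ →
        (∑ i, phat i * v i) - θ * Nstar v ≤ ∑ i, p i * v i) :=
  norm_ball_robust_regularization_general k N hNzero hNsmul hNadd phat hphat v θ hθ
end
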